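/- arXiv:1507.02378 — 11 statements merged into one kernel-verified Lean document; each statement's English description precedes it below -/
import Mathlib

section
/- Let L > 0 be a real number and let a, c : ℕ → ℝ be sequences with a j ≥ 0 and c j ≥ 0 for all j, a 1 ≤ c 1, and a i ≤ (1 + 1/L) · (∑_{j=1}^{i-1} a j) + c i for every i ≥ 2. Then for every i ≥ 1, ∑_{j=1}^{i} a j ≤ (2 + 1/L)^{i-1} · (∑_{j=1}^{i} c j). -/
/-!
Writing `S i` for the partial sum of `a` over `[1, i]`, the recurrence gives
`S (i+1) = S i + a (i+1) ≤ (2 + 1/L) S i + c (i+1)`. Since `2 + 1/L ≥ 1`, the fresh weight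
`c (i+1)` may be charged at the same factor `(2 + 1/L)^i`, and induction gives the bound.
-/

open Finset

theorem le_pow_mul_of_le_mul_add_sub {r : ℝ} (hr : 1 ≤ r) {u v : ℕ → ℝ} (hv : Monotone v)
    (h0 : u 0 ≤ v 0) (hstep : ∀ n, u (n + 1) ≤ r * u n + (v (n + 1) - v n)) (n : ℕ) :
    u n ≤ r ^ n * v n := by
  induction n with
  | zero => simpa using h0
  | succ n ih =>
    have hdv : 0 ≤ v (n + 1) - v n := sub_nonneg.mpr (hv n.le_succ)
    calc u (n + 1) ≤ r * (r ^ n * v n) + (v (n + 1) - v n) := (hstep n).trans (by gcongr)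
      _ = r ^ (n + 1) * v n + (v (n + 1) - v n) := by ring
      _ ≤ r ^ (n + 1) * v n + r ^ (n + 1) * (v (n + 1) - v n) := by
          gcongr; exact le_mul_of_one_le_left hdv (one_le_pow₀ hr)
      _ = r ^ (n + 1) * v (n + 1) := by ring

theorem stmt1_general (L : ℝ) (hL : 0 < L) (a c : ℕ → ℝ)
    (hc : ∀ j, 0 ≤ c j) (h1 : a 1 ≤ c 1)
    (hrec : ∀ i, 2 ≤ i → a i ≤ (1 + 1 / L) * (∑ j ∈ Finset.Icc 1 (i - 1), a j) + c i) :
    ∀ i, 1 ≤ i →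
      ∑ j ∈ Finset.Icc 1 i, a j ≤ (2 + 1 / L) ^ (i - 1) * ∑ j ∈ Finset.Icc 1 i, c j := by
  have hR : 1 ≤ 2 + 1 / L := by linarith [one_div_pos.mpr hL]
  have hT : Monotone fun n ↦ ∑ j ∈ Icc 1 (n + 1), c j := monotone_nat_of_le_succ fun n ↦ by
    simpa [sum_Icc_succ_top (show 1 ≤ n + 1 + 1 by omega)] using hc (n + 2)
  have hS := le_pow_mul_of_le_mul_add_sub (u := fun n ↦ ∑ j ∈ Icc 1 (n + 1), a j) hR hT
    (by simpa using h1) fun n ↦ by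
    have := hrec (n + 2) (by omega)
    simp only [Nat.reduceSubDiff] at this
    simp only [sum_Icc_succ_top (show 1 ≤ n + 1 + 1 by omega), add_sub_cancel_left]
    linarith
  intro i hi
  obtain ⟨n, rfl⟩ : ∃ n, i = n + 1 := ⟨i - 1, by omega⟩
  simpa using hS n

/-- Abstract form of the service-tree weight bound for Algorithm OnAlgTreesGeneral
on `L`-decreasing trees (Lemma `l:complete`): `a i` is the total weight of the depth-`i`
nodes of the service tree `X = C ∪ E`, and `c i` the total weight of the depth-`i`
nodes of the critical subtree `C`. -/
theorem stmt1 (L : ℝ) (hL : 0 < L) (a c : ℕ → ℝ)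
    (ha : ∀ j, 0 ≤ a j) (hc : ∀ j, 0 ≤ c j) (h1 : a 1 ≤ c 1)
    (hrec : ∀ i, 2 ≤ i → a i ≤ (1 + 1 / L) * (∑ j ∈ Finset.Icc 1 (i - 1), a j) + c i) :
    ∀ i, 1 ≤ i →
      ∑ j ∈ Finset.Icc 1 i, a j ≤ (2 + 1 / L) ^ (i - 1) * ∑ j ∈ Finset.Icc 1 i, c j :=
  stmt1_general L hL a c hc h1 hrec
end

section
/- Let (V, r, par) be a finite rooted tree, let ℓ : V → ℝ with ℓ u ≥ 0 for all u, and let w : V → ℝ → ℝ be such that for every u ∈ V the function w u is continuous, nondecreasing, nonnegative, and satisfies w u 0 = 0. For a set Z ⊆ V and time t write W(Z,t) = ∑_{u∈Z} w u t. Let v ∈ V, let t* ≥ 0, and let C be a subtree rooted at v with W(C, t*) = ℓ(C). Assume t* is minimal in the sense that for every subtree Z rooted at v and every s with 0 ≤ s < t*, W(Z, s) < ℓ(Z). Then for every u ∈ C, the induced subtree Y = C ∩ desc(u) satisfies W(Y, t*) ≥ ℓ(Y); consequently there is a least time τ(Y) ∈ [0, t*] with W(Y, τ(Y)) = ℓ(Y),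 so the maturity time of u is at most τ(Y), which is at most t*, the maturity time of v. -/
/-!
If `u ≠ v`, removing the descendants of `u` from the critical subtree `C` leaves a subtree
rooted at `v`. By minimality of `t*` and continuity its waiting cost at `t*` is at most its
weight, so the part `Y` that was removed carries at least its own weight at `t*`. Since the
waiting cost of `Y` starts at `0 ≤ ℓ(Y)`, the intermediate value theorem gives a time in
`[0, t*]` where it equals `ℓ(Y)`, and the set of such times is closed, so it has a least element.
-/

open scoped Classical

/-- `u` is a descendant of `v` (equivalently, `v` is an ancestor of `u`). -/
def IsDesc {V : Type*} (par : V → V) (u v : V) : Prop := ∃ n : ℕ, par^[n] u = v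

/-- `Z` is a subtree rooted at `v`: it contains `v`, consists of descendants of `v`,
and is closed under taking parents (except at `v`). -/
def IsSubtree {V : Type*} [DecidableEq V] (par : V → V) (v : V) (Z : Finset V) : Prop :=
  v ∈ Z ∧ (∀ u ∈ Z, IsDesc par u v) ∧ ∀ u ∈ Z, u ≠ v → par u ∈ Z

section Tree

variable {V : Type*} {par : V → V} {r : V}

theorem Function.IsPeriodicPt.eq_of_iterate_eq_fixedPoint {u : V} {n k : ℕ}
    (hroot : par r = r) (hk : par^[k] u = r) (hu : Function.IsPeriodicPt par n u) (hn : 0 < n) :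
    u = r := by
  have hle : k ≤ n * k := Nat.le_mul_of_pos_left k hn
  calc u = par^[n * k] u := (hu.mul_const k).symm
    _ = par^[n * k - k] (par^[k] u) := by rw [← Function.iterate_add_apply, Nat.sub_add_cancel hle]
    _ = r := by rw [hk, Function.iterate_fixed hroot]

theorem IsDesc.antisymm (hroot : par r = r) (hreach : ∀ v, ∃ n : ℕ, par^[n] v = r) {u v : V}
    (huv : IsDesc par u v) (hvu : IsDesc par v u) : u = v := by
  obtain ⟨n, hn⟩ := huv
  obtain ⟨m, hm⟩ := hvu
  rcases Nat.eq_zero_or_pos (m + n) with hzero | hpos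
  · simpa [show n = 0 by omega] using hn
  · have hper : Function.IsPeriodicPt par (m + n) u := by
      rw [Function.IsPeriodicPt, Function.IsFixedPt, Function.iterate_add_apply, hn, hm]
    obtain ⟨k, hk⟩ := hreach u
    have hur := hper.eq_of_iterate_eq_fixedPoint hroot hk hpos
    rw [← hn, hur, Function.iterate_fixed hroot]

theorem IsDesc.of_par {x u : V} (h : IsDesc par (par x) u) : IsDesc par x u := by
  obtain ⟨n, hn⟩ := h
  exact ⟨n + 1, by rwa [Function.iterate_succ_apply]⟩

variable [DecidableEq V]

theorem IsSubtree.filter_isDesc_eq_self {v : V} {C : Finset V} (hC : IsSubtree par v C) :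
    C.filter (fun x => IsDesc par x v) = C :=
  Finset.filter_true_of_mem hC.2.1

theorem IsSubtree.filter_not_isDesc (hroot : par r = r) (hreach : ∀ v, ∃ n : ℕ, par^[n] v = r)
    {v u : V} {C : Finset V} (hC : IsSubtree par v C) (hu : u ∈ C) (huv : u ≠ v) :
    IsSubtree par v (C.filter fun x => ¬ IsDesc par x u) := by
  refine ⟨?_, fun x hx => hC.2.1 x (Finset.mem_of_mem_filter x hx), ?_⟩
  · exact Finset.mem_filter.mpr
      ⟨hC.1, fun hvu => huv (IsDesc.antisymm hroot hreach (hC.2.1 u hu) hvu)⟩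
  · intro x hx hxv
    rw [Finset.mem_filter] at hx ⊢
    exact ⟨hC.2.2 x hx.1 hxv, fun hpar => hx.2 hpar.of_par⟩

end Tree

section Real

theorem le_of_continuous_of_forall_Ico_lt {g : ℝ → ℝ} (hg : Continuous g) {t c : ℝ}
    (ht : 0 ≤ t) (h0 : g 0 ≤ c) (h : ∀ s, 0 ≤ s → s < t → g s < c) : g t ≤ c := by
  rcases ht.eq_or_lt with rfl | hpos
  · exact h0
  · have hsub : Set.Ico 0 t ⊆ {s | g s ≤ c} := fun s hs => (h s hs.1 hs.2).le
    have hclosure := closure_minimal hsub (isClosed_le hg continuous_const)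
    rw [closure_Ico hpos.ne] at hclosure
    exact hclosure (Set.right_mem_Icc.mpr hpos.le)

theorem exists_isLeast_nonneg_eq_of_continuous {g : ℝ → ℝ} (hg : Continuous g) {t c : ℝ}
    (ht : 0 ≤ t) (h0 : g 0 ≤ c) (htc : c ≤ g t) :
    ∃ τ ≤ t, IsLeast {s | 0 ≤ s ∧ g s = c} τ := by
  obtain ⟨τ₀, hτ₀, hgτ₀⟩ := intermediate_value_Icc ht hg.continuousOn ⟨h0, htc⟩
  have hclosed : IsClosed {s | 0 ≤ s ∧ g s = c} :=
    (isClosed_le continuous_const continuous_id).inter (isClosed_eq hg continuous_const)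
  have hleast := hclosed.isLeast_csInf ⟨τ₀, hτ₀.1, hgτ₀⟩ ⟨0, fun s hs => hs.1⟩
  exact ⟨_, (hleast.2 ⟨hτ₀.1, hgτ₀⟩).trans hτ₀.2, hleast⟩

end Real

section Maturity

variable {V : Type*} [DecidableEq V] {par : V → V} {ℓ : V → ℝ} {w : V → ℝ → ℝ}

theorem sum_le_sum_of_isSubtree_of_forall_lt (hℓ : ∀ u, 0 ≤ ℓ u)
    (hwcont : ∀ u, Continuous (w u)) (hw0 : ∀ u, w u 0 = 0) {v : V} {tstar : ℝ}
    (htstar : 0 ≤ tstar) (hmin : ∀ Z : Finset V, IsSubtree par v Z → ∀ s, 0 ≤ s → s < tstar →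
      ∑ u ∈ Z, w u s < ∑ u ∈ Z, ℓ u) {Z : Finset V} (hZ : IsSubtree par v Z) :
    ∑ u ∈ Z, w u tstar ≤ ∑ u ∈ Z, ℓ u := by
  refine le_of_continuous_of_forall_Ico_lt (continuous_finsetSum _ fun u _ => hwcont u)
    htstar ?_ (hmin Z hZ)
  simpa only [hw0, Finset.sum_const_zero] using Finset.sum_nonneg fun u _ => hℓ u

theorem sum_filter_isDesc_le_of_critical {r : V} (hroot : par r = r)
    (hreach : ∀ v, ∃ n : ℕ, par^[n] v = r) (hℓ : ∀ u, 0 ≤ ℓ u)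
    (hwcont : ∀ u, Continuous (w u)) (hw0 : ∀ u, w u 0 = 0) {v : V} {tstar : ℝ}
    (htstar : 0 ≤ tstar) {C : Finset V} (hC : IsSubtree par v C)
    (hmature : ∑ u ∈ C, w u tstar = ∑ u ∈ C, ℓ u)
    (hmin : ∀ Z : Finset V, IsSubtree par v Z → ∀ s, 0 ≤ s → s < tstar →
      ∑ u ∈ Z, w u s < ∑ u ∈ Z, ℓ u) {u : V} (hu : u ∈ C) :
    ∑ x ∈ C.filter (fun x => IsDesc par x u), ℓ x ≤
      ∑ x ∈ C.filter (fun x => IsDesc par x u), w x tstar := by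
  by_cases huv : u = v
  · subst huv
    rw [hC.filter_isDesc_eq_self, hmature]
  · have hrest := sum_le_sum_of_isSubtree_of_forall_lt hℓ hwcont hw0 htstar hmin
      (hC.filter_not_isDesc hroot hreach hu huv)
    have hsplitℓ := Finset.sum_filter_add_sum_filter_not C (fun x => IsDesc par x u) ℓ
    have hsplitw := Finset.sum_filter_add_sum_filter_not C (fun x => IsDesc par x u)
      (fun x => w x tstar)
    linarith

end Maturity

theorem stmt2_general {V : Type*} [DecidableEq V]
    (r : V) (par : V → V) (hroot : par r = r) (hreach : ∀ v, ∃ n : ℕ, par^[n] v = r)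
    (ℓ : V → ℝ) (hℓ : ∀ u, 0 ≤ ℓ u)
    (w : V → ℝ → ℝ)
    (hwcont : ∀ u, Continuous (w u))
    (hw0 : ∀ u, w u 0 = 0)
    (v : V) (tstar : ℝ) (htstar : 0 ≤ tstar)
    (C : Finset V) (hC : IsSubtree par v C)
    (hmature : ∑ u ∈ C, w u tstar = ∑ u ∈ C, ℓ u)
    (hmin : ∀ Z : Finset V, IsSubtree par v Z → ∀ s, 0 ≤ s → s < tstar →
      ∑ u ∈ Z, w u s < ∑ u ∈ Z, ℓ u) :
    ∀ u ∈ C,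
      (∑ x ∈ C.filter (fun x => IsDesc par x u), ℓ x ≤
        ∑ x ∈ C.filter (fun x => IsDesc par x u), w x tstar) ∧
      ∃ τ : ℝ, 0 ≤ τ ∧ τ ≤ tstar ∧
        (∑ x ∈ C.filter (fun x => IsDesc par x u), w x τ =
          ∑ x ∈ C.filter (fun x => IsDesc par x u), ℓ x) ∧
        ∀ s, 0 ≤ s →
          (∑ x ∈ C.filter (fun x => IsDesc par x u), w x s =
            ∑ x ∈ C.filter (fun x => IsDesc par x u), ℓ x) → τ ≤ s := by
  intro u hu
  set Y := C.filter (fun x => IsDesc par x u)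
  have hY := sum_filter_isDesc_le_of_critical hroot hreach hℓ hwcont hw0 htstar hC hmature hmin hu
  have hY0 : ∑ x ∈ Y, w x 0 ≤ ∑ x ∈ Y, ℓ x := by
    simpa only [hw0, Finset.sum_const_zero] using Finset.sum_nonneg fun x _ => hℓ x
  obtain ⟨τ, hτt, ⟨hτ0, hτY⟩, hτleast⟩ := exists_isLeast_nonneg_eq_of_continuous
    (continuous_finsetSum Y fun x _ => hwcont x) htstar hY0 hY
  exact ⟨hY, τ, hτ0, hτt, hτY, fun s hs hsY => hτleast ⟨hs, hsY⟩⟩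

/-- Lemma `maturity-critical`: if `C` is a critical subtree of `v`, i.e. a subtree rooted
at `v` whose waiting cost at the maturity time `t*` equals its weight, where `t*` is the
first time at which any subtree rooted at `v` is mature, then every induced subtree
`Y = C ∩ desc(u)` for `u ∈ C` is mature at `t*`, and hence has a least time
`τ(Y) ∈ [0, t*]` at which its waiting cost equals its weight; so the maturity time of
`u` is at most `τ(Y) ≤ t*`. -/
theorem stmt2 {V : Type*} [Fintype V] [DecidableEq V]
    (r : V) (par : V → V) (hroot : par r = r) (hreach : ∀ v, ∃ n : ℕ, par^[n] v = r)
    (ℓ : V → ℝ) (hℓ : ∀ u, 0 ≤ ℓ u)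
    (w : V → ℝ → ℝ)
    (hwcont : ∀ u, Continuous (w u)) (hwmono : ∀ u, Monotone (w u))
    (hwnonneg : ∀ u t, 0 ≤ w u t) (hw0 : ∀ u, w u 0 = 0)
    (v : V) (tstar : ℝ) (htstar : 0 ≤ tstar)
    (C : Finset V) (hC : IsSubtree par v C)
    (hmature : ∑ u ∈ C, w u tstar = ∑ u ∈ C, ℓ u)
    (hmin : ∀ Z : Finset V, IsSubtree par v Z → ∀ s, 0 ≤ s → s < tstar →
      ∑ u ∈ Z, w u s < ∑ u ∈ Z, ℓ u) :
    ∀ u ∈ C,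
      (∑ x ∈ C.filter (fun x => IsDesc par x u), ℓ x ≤
        ∑ x ∈ C.filter (fun x => IsDesc par x u), w x tstar) ∧
      ∃ τ : ℝ, 0 ≤ τ ∧ τ ≤ tstar ∧
        (∑ x ∈ C.filter (fun x => IsDesc par x u), w x τ =
          ∑ x ∈ C.filter (fun x => IsDesc par x u), ℓ x) ∧
        ∀ s, 0 ≤ s →
          (∑ x ∈ C.filter (fun x => IsDesc par x u), w x s =
            ∑ x ∈ C.filter (fun x => IsDesc par x u), ℓ x) → τ ≤ s :=
  stmt2_general r par hroot hreach ℓ hℓ w hwcont hw0 v tstar htstar C hC hmature hmin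
end

section
/- Let (V, r, par) be a finite rooted tree, ℓ : V → ℝ with ℓ u ≥ 0 for all u, w : V → ℝ, and q ∈ V with ℓ q > 0. Suppose X and Y are service subtrees with q ∈ X and q ∈ Y, that ∑_{u∈X} w u = ℓ(X), and that ∑_{u∈Z} w u ≤ ℓ(Z) for every service subtree Z. Then ∑_{u∈Y∖X} w u < ℓ(Y). -/
open scoped Classical

/- Serving `X` uses up exactly `ℓ(X)`; since `X ∪ Y` is again a service subtree, the budget
`w(X ∪ Y) ≤ ℓ(X ∪ Y)` leaves at most `ℓ(Y \ X)` of waiting cost on `Y \ X`, and `ℓ(Y \ X) < ℓ(Y)`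
because `Y` also contains `q ∈ X`, whose weight is positive. -/

theorem IsSubtree.union {V : Type*} [DecidableEq V] {par : V → V} {v : V} {X Y : Finset V}
    (hX : IsSubtree par v X) (hY : IsSubtree par v Y) : IsSubtree par v (X ∪ Y) := by
  obtain ⟨hvX, hdX, hpX⟩ := hX
  obtain ⟨-, hdY, hpY⟩ := hY
  refine ⟨Finset.mem_union_left _ hvX, fun u hu => ?_, fun u hu hne => ?_⟩
  · rcases Finset.mem_union.1 hu with h | h
    exacts [hdX u h, hdY u h]
  · rcases Finset.mem_union.1 hu with h | h
    exacts [Finset.mem_union_left _ (hpX u h hne), Finset.mem_union_right _ (hpY u h hne)]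

theorem Finset.sum_sdiff_le_of_sum_union_le {ι M : Type*} [DecidableEq ι]
    [AddCommGroup M] [PartialOrder M] [IsOrderedAddMonoid M] {f g : ι → M} {X Y : Finset ι}
    (hX : ∑ u ∈ X, f u = ∑ u ∈ X, g u) (hXY : ∑ u ∈ X ∪ Y, f u ≤ ∑ u ∈ X ∪ Y, g u) :
    ∑ u ∈ Y \ X, f u ≤ ∑ u ∈ Y \ X, g u := by
  rw [← Finset.union_sdiff_self_eq_union, Finset.sum_union Finset.disjoint_sdiff,
    Finset.sum_union Finset.disjoint_sdiff, hX] at hXY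
  exact le_of_add_le_add_left hXY

theorem stmt3_general {V : Type*} [DecidableEq V]
    (r : V) (par : V → V)
    (ℓ : V → ℝ) (hℓ : ∀ u, 0 ≤ ℓ u) (w : V → ℝ)
    (q : V) (hq : 0 < ℓ q)
    (X Y : Finset V) (hX : IsSubtree par r X) (hY : IsSubtree par r Y)
    (hqX : q ∈ X) (hqY : q ∈ Y)
    (hXfull : ∑ u ∈ X, w u = ∑ u ∈ X, ℓ u)
    (hall : ∀ Z : Finset V, IsSubtree par r Z → ∑ u ∈ Z, w u ≤ ∑ u ∈ Z, ℓ u) :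
    ∑ u ∈ Y \ X, w u < ∑ u ∈ Y, ℓ u := by
  have hleft : ∑ u ∈ Y \ X, w u ≤ ∑ u ∈ Y \ X, ℓ u :=
    Finset.sum_sdiff_le_of_sum_union_le hXfull (hall _ (hX.union hY))
  have hright : ∑ u ∈ Y \ X, ℓ u < ∑ u ∈ Y, ℓ u :=
    Finset.sum_lt_sum_of_subset Finset.sdiff_subset hqY
      (fun h => (Finset.mem_sdiff.1 h).2 hqX) hq (fun u _ _ => hℓ u)
  exact hleft.trans_lt hright

/-- Lemma `maturity times of q`, part (a): if `X` is a service subtree containing the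
quasi-root `q` with `∑_{u∈X} w u = ℓ(X)` and every service subtree `Z` satisfies
`∑_{u∈Z} w u ≤ ℓ(Z)`, then for every service subtree `Y` containing `q`,
`∑_{u∈Y∖X} w u < ℓ(Y)`. -/
theorem stmt3 {V : Type*} [Fintype V] [DecidableEq V]
    (r : V) (par : V → V) (hroot : par r = r) (hreach : ∀ v, ∃ n : ℕ, par^[n] v = r)
    (ℓ : V → ℝ) (hℓ : ∀ u, 0 ≤ ℓ u) (w : V → ℝ)
    (q : V) (hq : 0 < ℓ q)
    (X Y : Finset V) (hX : IsSubtree par r X) (hY : IsSubtree par r Y)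
    (hqX : q ∈ X) (hqY : q ∈ Y)
    (hXfull : ∑ u ∈ X, w u = ∑ u ∈ X, ℓ u)
    (hall : ∀ Z : Finset V, IsSubtree par r Z → ∑ u ∈ Z, w u ≤ ∑ u ∈ Z, ℓ u) :
    ∑ u ∈ Y \ X, w u < ∑ u ∈ Y, ℓ u :=
  stmt3_general r par ℓ hℓ w q hq X Y hX hY hqX hqY hXfull hall
end

section
/- Let (V, r, par) be a finite rooted tree, ℓ : V → ℝ with ℓ r = 0 and ℓ u ≥ 0 for all u, and w : V → ℝ with w u ≥ 0 for all u. For a service subtree X define cost(X) = ℓ(X) + ∑_{u∉X} w u. Then a service subtree X satisfies cost(X) ≤ cost(Y) for every service subtree Y if and only if both of the following hold: (a) for every v ∈ X, ∑_{u ∈ X ∩ desc(v)} w u ≥ ℓ(X ∩ desc(v)); and (b) for every z ∉ X with par z ∈ X and every subtree Z rooted at z, ∑_{u∈Z} w u ≤ ℓ(Z). -/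
open scoped Classical

/-! With `f = ℓ - w`, the cost of a service subtree `X` is `∑_X f` plus the constant `∑_V w`,
so `X` is optimal iff it minimizes `∑_X f`. Necessity: cutting `X ∩ desc v` off `X` (shrinking `X`
to `{r}` when `v = r`) and attaching a subtree that hangs off `X` both give service subtrees.
Sufficiency: for another service subtree `Y`, the set `X \ Y` splits into the subtrees `X ∩ desc z`
below the nodes `z ∈ X \ Y` with `par z ∈ Y`, each of weight `≤ 0` by (a); symmetrically `Y \ X`
splits into subtrees hanging off `X`, each of weight `≥ 0` by (b). -/

open Finset

namespace IsDesc

variable {V : Type*} {par : V → V} {u v x r : V}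

lemma refl (par : V → V) (u : V) : IsDesc par u u := ⟨0, rfl⟩

lemma trans (huv : IsDesc par u v) (hvx : IsDesc par v x) : IsDesc par u x := by
  obtain ⟨m, rfl⟩ := huv
  obtain ⟨n, rfl⟩ := hvx
  exact ⟨n + m, Function.iterate_add_apply par n m u⟩

lemma par_of_ne (huv : IsDesc par u v) (hne : u ≠ v) : IsDesc par (par u) v := by
  obtain ⟨_ | n, rfl⟩ := huv
  · exact absurd rfl hne
  · exact ⟨n, (Function.iterate_succ_apply par n u).symm⟩

lemma of_par_s4 (h : IsDesc par (par u) v) : IsDesc par u v := by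
  obtain ⟨n, rfl⟩ := h
  exact ⟨n + 1, Function.iterate_succ_apply par n u⟩

lemma total (hv : IsDesc par u v) (hx : IsDesc par u x) : IsDesc par v x ∨ IsDesc par x v := by
  obtain ⟨m, rfl⟩ := hv
  obtain ⟨n, rfl⟩ := hx
  rcases le_total m n with hmn | hnm
  · exact .inl ⟨n - m, by rw [← Function.iterate_add_apply, Nat.sub_add_cancel hmn]⟩
  · exact .inr ⟨m - n, by rw [← Function.iterate_add_apply, Nat.sub_add_cancel hnm]⟩

lemma eq_of_isFixedPt (hroot : par r = r) (h : IsDesc par r v) : v = r := by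
  obtain ⟨n, rfl⟩ := h
  exact Function.iterate_fixed hroot n

end IsDesc

lemma exists_isDesc_notMem_and_par_mem {V : Type*} {par : V → V} {B : Finset V} {u : V}
    {n : ℕ} (hn : par^[n] u ∈ B) (hu : u ∉ B) : ∃ z, IsDesc par u z ∧ z ∉ B ∧ par z ∈ B := by
  induction n generalizing u with
  | zero => exact absurd hn hu
  | succ n ih =>
    by_cases hpu : par u ∈ B
    · exact ⟨u, .refl par u, hu, hpu⟩
    · obtain ⟨z, hz, hzB, hpz⟩ := ih hn hpu
      exact ⟨z, hz.of_par_s4, hzB, hpz⟩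

namespace IsSubtree

variable {V : Type*} [DecidableEq V] {par : V → V} {r z : V} {S Z : Finset V}

lemma singleton (par : V → V) (v : V) : IsSubtree par v {v} :=
  ⟨mem_singleton_self v, fun _ hu => mem_singleton.1 hu ▸ .refl par v,
    fun _ hu hne => absurd (mem_singleton.1 hu) hne⟩

lemma mem_of_isDesc (hroot : par r = r) (hS : IsSubtree par r S) {u v : V} (hu : u ∈ S)
    (huv : IsDesc par u v) : v ∈ S := by
  obtain ⟨n, rfl⟩ := huv
  induction n generalizing u with
  | zero => exact hu
  | succ n ih =>
    rw [Function.iterate_succ_apply]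
    refine ih ?_
    by_cases hur : u = r
    · rw [hur, hroot]; exact hS.1
    · exact hS.2.2 u hu hur

lemma filter_isDesc (hroot : par r = r) (hS : IsSubtree par r S) (hz : z ∈ S) :
    IsSubtree par z (S.filter (IsDesc par · z)) := by
  refine ⟨mem_filter.2 ⟨hz, .refl par z⟩, fun u hu => (mem_filter.1 hu).2, fun u hu hne => ?_⟩
  obtain ⟨huS, huz⟩ := mem_filter.1 hu
  have hur : u ≠ r := by
    rintro rfl
    exact hne (huz.eq_of_isFixedPt hroot).symm
  exact mem_filter.2 ⟨hS.2.2 u huS hur, huz.par_of_ne hne⟩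

lemma sdiff_filter_isDesc (hroot : par r = r) (hS : IsSubtree par r S) {v : V} (hv : v ≠ r) :
    IsSubtree par r (S \ S.filter (IsDesc par · v)) := by
  refine ⟨mem_sdiff.2 ⟨hS.1, fun hr => hv ?_⟩, fun u hu => hS.2.1 u (mem_sdiff.1 hu).1,
    fun u hu hne => ?_⟩
  · exact (mem_filter.1 hr).2.eq_of_isFixedPt hroot
  obtain ⟨huS, hud⟩ := mem_sdiff.1 hu
  refine mem_sdiff.2 ⟨hS.2.2 u huS hne, fun hpu => hud ?_⟩
  exact mem_filter.2 ⟨huS, (mem_filter.1 hpu).2.of_par_s4⟩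

lemma union_of_par_mem (hS : IsSubtree par r S) (hZ : IsSubtree par z Z) (hz : par z ∈ S) :
    IsSubtree par r (S ∪ Z) := by
  have hzr : IsDesc par z r := (hS.2.1 _ hz).of_par_s4
  refine ⟨mem_union_left _ hS.1, fun u hu => ?_, fun u hu hne => ?_⟩
  · rcases mem_union.1 hu with h | h
    · exact hS.2.1 u h
    · exact (hZ.2.1 u h).trans hzr
  · rcases mem_union.1 hu with h | h
    · exact mem_union_left _ (hS.2.2 u h hne)
    · by_cases huz : u = z
      · exact mem_union_left _ (huz ▸ hz)
      · exact mem_union_right _ (hZ.2.2 u h huz)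

lemma disjoint_of_notMem (hroot : par r = r) (hS : IsSubtree par r S) (hZ : IsSubtree par z Z)
    (hz : z ∉ S) : Disjoint S Z :=
  disjoint_left.2 fun u huS huZ => hz (hS.mem_of_isDesc hroot huS (hZ.2.1 u huZ))

/-- Every node of `A \ B` hangs below exactly one node `z ∈ A \ B` whose parent lies in `B`. -/
lemma sum_sdiff_eq_sum_sum_filter_isDesc {M : Type*} [AddCommMonoid M] (hroot : par r = r)
    (hreach : ∀ v, ∃ n : ℕ, par^[n] v = r) {A B : Finset V} (hA : IsSubtree par r A)
    (hB : IsSubtree par r B) (g : V → M) :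
    ∑ u ∈ A \ B, g u =
      ∑ z ∈ (A \ B).filter (fun z => par z ∈ B), ∑ u ∈ A.filter (IsDesc par · z), g u := by
  have hcover : ((A \ B).filter (fun z => par z ∈ B)).biUnion
      (fun z => A.filter (IsDesc par · z)) = A \ B := by
    ext u
    simp only [mem_biUnion, mem_filter, mem_sdiff]
    constructor
    · rintro ⟨z, ⟨⟨-, hzB⟩, -⟩, huA, huz⟩
      exact ⟨huA, fun huB => hzB (hB.mem_of_isDesc hroot huB huz)⟩
    · rintro ⟨huA, huB⟩
      obtain ⟨n, hn⟩ := hreach u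
      obtain ⟨z, huz, hzB, hpz⟩ := exists_isDesc_notMem_and_par_mem (hn ▸ hB.1) huB
      exact ⟨z, ⟨⟨hA.mem_of_isDesc hroot huA huz, hzB⟩, hpz⟩, huA, huz⟩
  have hdisj : ((A \ B).filter (fun z => par z ∈ B) : Set V).PairwiseDisjoint
      (fun z => A.filter (IsDesc par · z)) := by
    intro z₁ hz₁ z₂ hz₂ hne
    simp only [mem_coe, mem_filter, mem_sdiff] at hz₁ hz₂
    refine disjoint_left.2 fun u hu₁ hu₂ => ?_
    -- The lower of two nested boundary nodes would have its parent, hence the upper one, in `B`.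
    have below : ∀ {x y : V}, par x ∈ B → y ∉ B → x ≠ y → ¬ IsDesc par x y :=
      fun hx hy hxy h => hy (hB.mem_of_isDesc hroot hx (h.par_of_ne hxy))
    rcases (mem_filter.1 hu₁).2.total (mem_filter.1 hu₂).2 with h | h
    · exact below hz₁.2 hz₂.1.2 hne h
    · exact below hz₂.2 hz₁.1.2 (Ne.symm hne) h
  rw [← sum_biUnion hdisj, hcover]

end IsSubtree

section Minimizer

variable {V : Type*} [DecidableEq V] {par : V → V} {r : V} {X : Finset V} {f : V → ℝ}

lemma sum_filter_isDesc_nonpos_of_forall_le (hroot : par r = r) (hX : IsSubtree par r X)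
    (hf : f r ≤ 0) (hmin : ∀ Y, IsSubtree par r Y → ∑ u ∈ X, f u ≤ ∑ u ∈ Y, f u) (v : V) :
    ∑ u ∈ X.filter (IsDesc par · v), f u ≤ 0 := by
  by_cases hvr : v = r
  · subst hvr
    rw [filter_true_of_mem hX.2.1]
    have hsingle := hmin {v} (.singleton par v)
    rw [sum_singleton] at hsingle
    exact hsingle.trans hf
  · have hcut := hmin _ (hX.sdiff_filter_isDesc hroot hvr)
    rw [← sum_sdiff (filter_subset (IsDesc par · v) X)] at hcut
    linarith

lemma sum_nonneg_of_forall_le (hroot : par r = r) (hX : IsSubtree par r X)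
    (hmin : ∀ Y, IsSubtree par r Y → ∑ u ∈ X, f u ≤ ∑ u ∈ Y, f u) {z : V} (hz : z ∉ X)
    (hpz : par z ∈ X) {Z : Finset V} (hZ : IsSubtree par z Z) : 0 ≤ ∑ u ∈ Z, f u := by
  have hext := hmin _ (hX.union_of_par_mem hZ hpz)
  rw [sum_union (hX.disjoint_of_notMem hroot hZ hz)] at hext
  linarith

lemma sum_le_sum_of_isSubtree (hroot : par r = r) (hreach : ∀ v, ∃ n : ℕ, par^[n] v = r)
    (hX : IsSubtree par r X) (ha : ∀ v ∈ X, ∑ u ∈ X.filter (IsDesc par · v), f u ≤ 0)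
    (hb : ∀ z, z ∉ X → par z ∈ X → ∀ Z : Finset V, IsSubtree par z Z → 0 ≤ ∑ u ∈ Z, f u)
    {Y : Finset V} (hY : IsSubtree par r Y) : ∑ u ∈ X, f u ≤ ∑ u ∈ Y, f u := by
  have hXY : ∑ u ∈ X \ Y, f u ≤ 0 := by
    rw [hX.sum_sdiff_eq_sum_sum_filter_isDesc hroot hreach hY]
    exact sum_nonpos fun z hz => ha z (mem_sdiff.1 (mem_filter.1 hz).1).1
  have hYX : 0 ≤ ∑ u ∈ Y \ X, f u := by
    rw [hY.sum_sdiff_eq_sum_sum_filter_isDesc hroot hreach hX]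
    refine sum_nonneg fun z hz => ?_
    obtain ⟨hzYX, hpz⟩ := mem_filter.1 hz
    exact hb z (mem_sdiff.1 hzYX).2 hpz _ (hY.filter_isDesc hroot (mem_sdiff.1 hzYX).1)
  rw [← sum_inter_add_sum_sdiff X Y, ← sum_inter_add_sum_sdiff Y X, inter_comm]
  linarith

theorem forall_sum_le_iff (hroot : par r = r) (hreach : ∀ v, ∃ n : ℕ, par^[n] v = r)
    (hX : IsSubtree par r X) (hf : f r ≤ 0) :
    (∀ Y, IsSubtree par r Y → ∑ u ∈ X, f u ≤ ∑ u ∈ Y, f u) ↔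
      (∀ v ∈ X, ∑ u ∈ X.filter (IsDesc par · v), f u ≤ 0) ∧
        ∀ z, z ∉ X → par z ∈ X → ∀ Z : Finset V, IsSubtree par z Z → 0 ≤ ∑ u ∈ Z, f u :=
  ⟨fun hmin => ⟨fun v _ => sum_filter_isDesc_nonpos_of_forall_le hroot hX hf hmin v,
      fun _ hz hpz _ hZ => sum_nonneg_of_forall_le hroot hX hmin hz hpz hZ⟩,
    fun ⟨ha, hb⟩ _ hY => sum_le_sum_of_isSubtree hroot hreach hX ha hb hY⟩

end Minimizer

lemma sum_add_sum_compl_le_iff {V : Type*} [Fintype V] [DecidableEq V] (ℓ w : V → ℝ)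
    (X Y : Finset V) :
    ∑ u ∈ X, ℓ u + ∑ u ∈ Xᶜ, w u ≤ ∑ u ∈ Y, ℓ u + ∑ u ∈ Yᶜ, w u ↔
      ∑ u ∈ X, (ℓ u - w u) ≤ ∑ u ∈ Y, (ℓ u - w u) := by
  rw [sum_sub_distrib, sum_sub_distrib]
  have hXw := sum_compl_add_sum X w
  have hYw := sum_compl_add_sum Y w
  constructor <;> intro h <;> linarith

theorem stmt4_general {V : Type*} [Fintype V] [DecidableEq V]
    (r : V) (par : V → V) (hroot : par r = r) (hreach : ∀ v, ∃ n : ℕ, par^[n] v = r)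
    (ℓ : V → ℝ) (hℓr : ℓ r = 0)
    (w : V → ℝ) (hw : ∀ u, 0 ≤ w u)
    (X : Finset V) (hX : IsSubtree par r X) :
    (∀ Y : Finset V, IsSubtree par r Y →
        ∑ u ∈ X, ℓ u + ∑ u ∈ Xᶜ, w u ≤ ∑ u ∈ Y, ℓ u + ∑ u ∈ Yᶜ, w u) ↔
      ((∀ v ∈ X, ∑ u ∈ X.filter (fun u => IsDesc par u v), ℓ u ≤
          ∑ u ∈ X.filter (fun u => IsDesc par u v), w u) ∧
       (∀ z, z ∉ X → par z ∈ X → ∀ Z : Finset V, IsSubtree par z Z →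
          ∑ u ∈ Z, w u ≤ ∑ u ∈ Z, ℓ u)) := by
  have hr : ℓ r - w r ≤ 0 := by linarith [hw r]
  simp_rw [sum_add_sum_compl_le_iff, forall_sum_le_iff (f := fun u => ℓ u - w u) hroot hreach hX hr,
    sum_sub_distrib, sub_nonpos, sub_nonneg]

/-- Characterization of optimal single-phase services (the paper's Lemma on
optimal schedules for Single-Phase MLAP): a service subtree `X` minimizes
`cost(X) = ℓ(X) + ∑_{u∉X} w u` over all service subtrees if and only if
(a) every induced subtree `X ∩ desc(v)`, `v ∈ X`, is mature, and
(b) every subtree hanging off `X` is not over-mature. -/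
theorem stmt4 {V : Type*} [Fintype V] [DecidableEq V]
    (r : V) (par : V → V) (hroot : par r = r) (hreach : ∀ v, ∃ n : ℕ, par^[n] v = r)
    (ℓ : V → ℝ) (hℓr : ℓ r = 0) (hℓ : ∀ u, 0 ≤ ℓ u)
    (w : V → ℝ) (hw : ∀ u, 0 ≤ w u)
    (X : Finset V) (hX : IsSubtree par r X) :
    (∀ Y : Finset V, IsSubtree par r Y →
        ∑ u ∈ X, ℓ u + ∑ u ∈ Xᶜ, w u ≤ ∑ u ∈ Y, ℓ u + ∑ u ∈ Yᶜ, w u) ↔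
      ((∀ v ∈ X, ∑ u ∈ X.filter (fun u => IsDesc par u v), ℓ u ≤
          ∑ u ∈ X.filter (fun u => IsDesc par u v), w u) ∧
       (∀ z, z ∉ X → par z ∈ X → ∀ Z : Finset V, IsSubtree par z Z →
          ∑ u ∈ Z, w u ≤ ∑ u ∈ Z, ℓ u)) :=
  stmt4_general r par hroot hreach ℓ hℓr w hw X hX
end

section
/- Let (V, r, par) be a finite rooted tree, ℓ : V → ℝ, and w : V → ℝ → ℝ such that w u is nondecreasing for every u ∈ V. For t ∈ ℝ let O(t) be the inclusion-maximal service subtree that is covered with respect to the function u ↦ w u t. Then for all s ≤ t, O(s) ⊆ O(t). -/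
open scoped Classical

/-- `Z` is a covered subtree rooted at `z` (with respect to the waiting costs `w`). -/
def Covered {V : Type*} [Fintype V] [DecidableEq V] (par : V → V) (ℓ w : V → ℝ)
    (z : V) (Z : Finset V) : Prop :=
  IsSubtree par z Z ∧ ∀ x ∈ Z, x ≠ z →
    ∑ u ∈ Z.filter (fun u => IsDesc par u x), ℓ u ≤
      ∑ u ∈ Z.filter (fun u => IsDesc par u x), w u

theorem Covered.mono {V : Type*} [Fintype V] [DecidableEq V] {par : V → V} {ℓ w w' : V → ℝ}
    {z : V} {Z : Finset V} (hZ : Covered par ℓ w z Z) (hww' : ∀ u, w u ≤ w' u) :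
    Covered par ℓ w' z Z :=
  ⟨hZ.1, fun x hx hxz => (hZ.2 x hx hxz).trans (Finset.sum_le_sum fun u _ => hww' u)⟩

theorem stmt8_general {V : Type*} [Fintype V] [DecidableEq V]
    (r : V) (par : V → V)
    (ℓ : V → ℝ) (w : V → ℝ → ℝ) (hw : ∀ u, Monotone (w u))
    (s t : ℝ) (hst : s ≤ t) (Os Ot : Finset V)
    (hOs : Covered par ℓ (fun u => w u s) r Os)
    (hOtmax : ∀ Z, Covered par ℓ (fun u => w u t) r Z → Z ⊆ Ot) :
    Os ⊆ Ot :=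
  hOtmax Os (hOs.mono fun u => hw u hst)

/-- Corollary `optima-grow`: if the waiting cost of each node is nondecreasing in time,
then the inclusion-maximal covered service subtree `O(t)` grows with `t`:
for `s ≤ t`, `O(s) ⊆ O(t)`. -/
theorem stmt8 {V : Type*} [Fintype V] [DecidableEq V]
    (r : V) (par : V → V) (hroot : par r = r) (hreach : ∀ v, ∃ n : ℕ, par^[n] v = r)
    (ℓ : V → ℝ) (w : V → ℝ → ℝ) (hw : ∀ u, Monotone (w u))
    (s t : ℝ) (hst : s ≤ t) (Os Ot : Finset V)
    (hOs : Covered par ℓ (fun u => w u s) r Os)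
    (hOsmax : ∀ Z, Covered par ℓ (fun u => w u s) r Z → Z ⊆ Os)
    (hOt : Covered par ℓ (fun u => w u t) r Ot)
    (hOtmax : ∀ Z, Covered par ℓ (fun u => w u t) r Z → Z ⊆ Ot) :
    Os ⊆ Ot :=
  stmt8_general r par ℓ w hw s t hst Os Ot hOs hOtmax
end

section
/- Let R be a finite set of requests, each a triple (p, a, d) ∈ ℝ≥0 × ℝ≥0 × ℝ≥0 with a ≤ d (position on the half-line [0,∞), arrival time, deadline). Let m ∈ ℕ, let t_1 < t_2 < ⋯ < t_m be real times and x_1, …, x_m ≥ 0 real positions, and suppose for each j ∈ {1,…,m} there is a request (x_j, a_j, t_j) ∈ R with a_j ≤ t_j such that for every i < j, either t_i < a_j or 2·x_i < x_j (the request triggering the j-th service is still pending: no earlier service delivered from a point ≥ x_j at or after its arrival). Let O be a finite set of pairs (y, s) ∈ ℝ≥0 × ℝ≥0 such that for each j ∈ {1,…,m} there exists (y, s) ∈ O with a_j ≤ s ≤ t_j and y ≥ x_j. Then ∑_{j=1}^{m} 2·x_j ≤ 4 · ∑_{(y,s)∈O} y. -/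
/-!
Charge every DLINE service `j` to a service `(y, s)` of `O` that serves its triggering
request. If `i < j` are charged to the same `(y, s)`, then `a j ≤ s ≤ t i`, so the
request triggering `j` was already pending at time `t i`, and the only way it survived
is `2 * x i < x j`. Hence the positions charged to `(y, s)` at least double from one to
the next while staying below `y`, so they sum to at most `2 * y`.
-/

open Finset

theorem sum_le_two_mul_of_doubling {ι K : Type*} [LinearOrder ι]
    [Field K] [LinearOrder K] [IsStrictOrderedRing K]
    {s : Finset ι} {x : ι → K} {y : K} (hy : 0 ≤ y) (hle : ∀ i ∈ s, x i ≤ y)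
    (hdbl : ∀ i ∈ s, ∀ j ∈ s, i < j → 2 * x i < x j) :
    ∑ i ∈ s, x i ≤ 2 * y := by
  induction s using Finset.induction_on_max generalizing y with
  | empty => simpa using hy
  | insert M s hlt ih =>
    have hM : x M ≤ y := hle M (mem_insert_self M s)
    have hrest : ∑ i ∈ s, x i ≤ 2 * (y / 2) := by
      refine ih (by positivity) (fun i hi => ?_)
        (fun i hi j hj => hdbl i (mem_insert_of_mem hi) j (mem_insert_of_mem hj))
      have := hdbl i (mem_insert_of_mem hi) M (mem_insert_self M s) (hlt i hi)
      linarith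
    rw [sum_insert fun hM => lt_irrefl M (hlt M hM)]
    linarith

theorem stmt10_general (R : Finset (ℝ × ℝ × ℝ))
    (m : ℕ) (t x a : ℕ → ℝ)
    (hreq : ∀ j, 1 ≤ j → j ≤ m →
      (x j, a j, t j) ∈ R ∧ a j ≤ t j ∧
        ∀ i, 1 ≤ i → i < j → (t i < a j ∨ 2 * x i < x j))
    (O : Finset (ℝ × ℝ)) (hO : ∀ p ∈ O, 0 ≤ p.1 ∧ 0 ≤ p.2)
    (hserve : ∀ j, 1 ≤ j → j ≤ m → ∃ p ∈ O, a j ≤ p.2 ∧ p.2 ≤ t j ∧ x j ≤ p.1) :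
    ∑ j ∈ Finset.Icc 1 m, 2 * x j ≤ 4 * ∑ p ∈ O, p.1 := by
  classical
  have hcharge : ∀ j, ∃ p : ℝ × ℝ,
      j ∈ Icc 1 m → p ∈ O ∧ a j ≤ p.2 ∧ p.2 ≤ t j ∧ x j ≤ p.1 := fun j => by
    by_cases hj : j ∈ Icc 1 m
    · obtain ⟨p, hp⟩ := hserve j (mem_Icc.1 hj).1 (mem_Icc.1 hj).2
      exact ⟨p, fun _ => hp⟩
    · exact ⟨0, fun h => absurd h hj⟩
  choose charge hcharge using hcharge
  have hfiber : ∀ p ∈ O, ∑ j ∈ Icc 1 m with charge j = p, x j ≤ 2 * p.1 := by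
    intro p hp
    refine sum_le_two_mul_of_doubling (hO p hp).1 (fun j hj => ?_) (fun i hi j hj hij => ?_)
    · obtain ⟨hjm, rfl⟩ := mem_filter.1 hj
      exact (hcharge j hjm).2.2.2
    · obtain ⟨him, rfl⟩ := mem_filter.1 hi
      obtain ⟨hjm, hji⟩ := mem_filter.1 hj
      have hpending : a j ≤ t i := (hcharge j hjm).2.1.trans (hji ▸ (hcharge i him).2.2.1)
      obtain ⟨hj1, hjm⟩ := mem_Icc.1 hjm
      exact ((hreq j hj1 hjm).2.2 i (mem_Icc.1 him).1 hij).resolve_left hpending.not_gt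
  calc ∑ j ∈ Icc 1 m, 2 * x j
      = 2 * ∑ p ∈ O, ∑ j ∈ Icc 1 m with charge j = p, x j := by
        rw [← mul_sum, sum_fiberwise_of_maps_to fun j hj => (hcharge j hj).1]
    _ ≤ 2 * ∑ p ∈ O, 2 * p.1 := by gcongr with p hp; exact hfiber p hp
    _ = 4 * ∑ p ∈ O, p.1 := by rw [← mul_sum]; ring

/-- Algorithm DLINE is `4`-competitive for MLAP-D on the line. `R` is the (finite) set
of requests `(p, a, d)` (position, arrival, deadline). The algorithm's schedule delivers
from `2 · x j` at time `t j`, where `(x j, a j, t j) ∈ R` is the triggering request,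
which is still pending at time `t j`: for every earlier service `i < j`, either it
happened before the arrival (`t i < a j`) or it did not reach the request
(`2 · x i < x j`). `O` is any schedule (set of services `(y, s)`, serving `[0, y]` at
time `s`) that serves every triggering request within its `[arrival, deadline]` window.
Then the algorithm's cost `∑ 2 · x j` is at most `4` times the cost `∑ y` of `O`. -/
theorem stmt10 (R : Finset (ℝ × ℝ × ℝ))
    (hR : ∀ p ∈ R, 0 ≤ p.1 ∧ 0 ≤ p.2.1 ∧ p.2.1 ≤ p.2.2)
    (m : ℕ) (t x a : ℕ → ℝ)
    (htmono : ∀ i j, 1 ≤ i → i < j → j ≤ m → t i < t j)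
    (hx : ∀ j, 1 ≤ j → j ≤ m → 0 ≤ x j)
    (hreq : ∀ j, 1 ≤ j → j ≤ m →
      (x j, a j, t j) ∈ R ∧ a j ≤ t j ∧
        ∀ i, 1 ≤ i → i < j → (t i < a j ∨ 2 * x i < x j))
    (O : Finset (ℝ × ℝ)) (hO : ∀ p ∈ O, 0 ≤ p.1 ∧ 0 ≤ p.2)
    (hserve : ∀ j, 1 ≤ j → j ≤ m → ∃ p ∈ O, a j ≤ p.2 ∧ p.2 ≤ t j ∧ x j ≤ p.1) :
    ∑ j ∈ Finset.Icc 1 m, 2 * x j ≤ 4 * ∑ p ∈ O, p.1 :=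
  stmt10_general R m t x a hreq O hO hserve
end

section
/- For every real R < 4 there exists a positive integer B such that every finite sequence of integers 0 = x_0 < x_1 < x_2 < ⋯ < x_{m-1} < x_m = B (with m ≥ 1) has an index k with 1 ≤ k ≤ m and ∑_{i=0}^{k} x_i > R · (x_{k-1} + 1). -/
/-!
Suppose `0 = x 0 < ⋯ < x m = B` is `R`-competitive with `1 ≤ R < 4`, and let
`S k = x 0 + ⋯ + x k`. Competitiveness gives `x (k+1) < 4 (x k + 1)`, so `x m < 4 ^ m`: large
`B` forces many bids. On the other hand, once `x k ≥ 8 / (4 - R)` the ratio `S k / x k` grows by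
at least `(4 - R) / 8` per bid, it is at least `1`, and at the end it is at most `R`; so the
number of bids is bounded independently of `B`. Taking `B = 4 ^ M` with `M` above that bound
gives the contradiction.
-/

open Finset

theorem div_add_le_add_div_of_add_le_mul {u s p q : ℝ} (hu : 4 / 9 ≤ u) (hu4 : u ≤ 4)
    (hs : 0 ≤ s) (hp : 0 < p) (hq : 0 < q) (h : s + q ≤ u * p) :
    s / p + (4 - u) / 4 ≤ (s + q) / q := by
  rw [div_add' _ _ _ hp.ne', div_le_div_iff₀ hp hq]
  rcases le_or_gt (s + (4 - u) / 4 * p) p with hsp | hsp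
  · nlinarith [mul_nonneg hq.le (sub_nonneg.mpr hsp), mul_nonneg hs hp.le]
  · -- `q ≤ u p - s` reduces the claim to a quadratic form in `s, p`, which is
    -- positive semidefinite exactly for `4/9 ≤ u ≤ 4`.
    have hq' : q ≤ u * p - s := by linarith
    have h9u : 0 ≤ 9 * u - 4 := by linarith
    nlinarith [mul_le_mul_of_nonneg_right hq' (sub_nonneg.mpr hsp.le),
      sq_nonneg (4 * s - (5 * u - 4) / 2 * p),
      mul_nonneg (mul_nonneg (sub_nonneg.mpr hu4) h9u) (sq_nonneg p)]

noncomputable def prefixSum (x : ℕ → ℤ) (k : ℕ) : ℝ :=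
  ∑ i ∈ range (k + 1), (x i : ℝ)

/-- The bids `x 1 < ⋯ < x m` are `R`-competitive: a target in `(x (k-1), x k]`, hence at least
`x (k-1) + 1`, is reached at total cost `prefixSum x k`. -/
def IsCompetitive (R : ℝ) (x : ℕ → ℤ) (m : ℕ) : Prop :=
  ∀ k, 1 ≤ k → k ≤ m → prefixSum x k ≤ R * ((x (k - 1) : ℝ) + 1)

theorem prefixSum_succ (x : ℕ → ℤ) (k : ℕ) :
    prefixSum x (k + 1) = prefixSum x k + x (k + 1) :=
  sum_range_succ _ _

structure IsBidSequence (x : ℕ → ℤ) (m : ℕ) : Prop where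
  zero : x 0 = 0
  lt_succ : ∀ i < m, x i < x (i + 1)

namespace IsBidSequence

variable {x : ℕ → ℤ} {m : ℕ}

theorem natCast_le (hx : IsBidSequence x m) : ∀ i ≤ m, (i : ℤ) ≤ x i
  | 0, _ => hx.zero.ge
  | i + 1, hi => by have := hx.natCast_le i (by omega); have := hx.lt_succ i hi; omega

theorem nonneg (hx : IsBidSequence x m) {i : ℕ} (hi : i ≤ m) : (0 : ℝ) ≤ x i := by
  exact_mod_cast (Int.natCast_nonneg i).trans (hx.natCast_le i hi)

theorem le_prefixSum (hx : IsBidSequence x m) {k : ℕ} (hk : k ≤ m) :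
    (x k : ℝ) ≤ prefixSum x k :=
  single_le_sum (f := fun i => (x i : ℝ))
    (fun i hi => hx.nonneg (by simp at hi; omega)) (self_mem_range_succ k)

end IsBidSequence

namespace IsCompetitive

variable {R : ℝ} {x : ℕ → ℤ} {m : ℕ}
  (hx : IsBidSequence x m) (hcomp : IsCompetitive R x m)
include hx hcomp

theorem mono {R' : ℝ} (hR : R ≤ R') : IsCompetitive R' x m := by
  intro k hk1 hkm
  have := hx.nonneg (i := k - 1) (by omega)
  exact (hcomp k hk1 hkm).trans (by gcongr)

theorem add_one_le_four_pow (hR : R < 4) : ∀ k ≤ m, x k + 1 ≤ 4 ^ k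
  | 0, _ => by simp [hx.zero]
  | k + 1, hk => by
    have ih := add_one_le_four_pow hR k (by omega)
    have := hx.nonneg (i := k) (by omega)
    have : (x (k + 1) : ℝ) < 4 * (x k + 1) := calc
      (x (k + 1) : ℝ) ≤ prefixSum x (k + 1) := hx.le_prefixSum hk
      _ ≤ R * (x k + 1) := hcomp (k + 1) (by omega) hk
      _ < 4 * (x k + 1) := by gcongr
    have : x (k + 1) < 4 * (x k + 1) := by exact_mod_cast this
    rw [pow_succ]; omega

theorem prefixSum_le_mul (hR : 0 ≤ R) (hm : 1 ≤ m) : prefixSum x m ≤ R * x m := by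
  have hstep : x (m - 1) + 1 ≤ x m := by
    have := hx.lt_succ (m - 1) (by omega)
    rwa [Nat.sub_add_cancel hm] at this
  calc prefixSum x m ≤ R * ((x (m - 1) : ℝ) + 1) := hcomp m hm le_rfl
    _ ≤ R * x m := by gcongr; exact_mod_cast hstep

theorem div_add_le_div_succ (hR1 : 1 ≤ R) (hR4 : R < 4) {k : ℕ} (hk : k < m)
    (hxk : 8 / (4 - R) ≤ x k) :
    prefixSum x k / x k + (4 - R) / 8 ≤ prefixSum x (k + 1) / x (k + 1) := by
  have hR : 0 < 4 - R := by linarith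
  have hpos : 0 < (x k : ℝ) := (div_pos (by norm_num) hR).trans_le hxk
  have hlt : (x k : ℝ) < x (k + 1) := by exact_mod_cast hx.lt_succ k hk
  have hxk' : 8 ≤ (4 - R) * x k := (div_le_iff₀' hR).mp hxk
  -- `x k ≥ 8 / (4 - R)` absorbs the `+ 1` of competitiveness at the cost of raising `R` to
  -- `(R + 4) / 2`, which is still below `4`.
  have hbound : prefixSum x k + x (k + 1) ≤ (R + 4) / 2 * x k := by
    have := hcomp (k + 1) (by omega) hk
    rw [Nat.add_sub_cancel, prefixSum_succ] at this
    nlinarith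
  have := div_add_le_add_div_of_add_le_mul (by linarith) (by linarith)
    ((hx.nonneg hk.le).trans (hx.le_prefixSum hk.le)) hpos (hpos.trans hlt) hbound
  rw [prefixSum_succ]
  convert this using 2; ring

theorem ratio_growth (hR1 : 1 ≤ R) (hR4 : R < 4) {K : ℕ} (hK : 8 / (4 - R) ≤ K) :
    ∀ k, K ≤ k → k ≤ m → 1 + (k - K) * ((4 - R) / 8) ≤ prefixSum x k / x k := by
  intro k hKk
  induction k, hKk using Nat.le_induction with
  | base =>
    intro hKm
    have hxK : (K : ℝ) ≤ x K := by exact_mod_cast hx.natCast_le K hKm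
    have hpos : 0 < (x K : ℝ) := ((div_pos (by norm_num) (by linarith)).trans_le hK).trans_le hxK
    rw [sub_self, zero_mul, add_zero, one_le_div hpos]
    exact hx.le_prefixSum hKm
  | succ k hKk ih =>
    intro hkm
    have hxk : (k : ℝ) ≤ x k := by exact_mod_cast hx.natCast_le k (by omega)
    have hKk' : (K : ℝ) ≤ k := by exact_mod_cast hKk
    have := div_add_le_div_succ hx hcomp hR1 hR4 hkm (by linarith)
    push_cast
    linarith [ih (by omega)]

theorem length_lt (hR1 : 1 ≤ R) (hR4 : R < 4) (hm : 1 ≤ m) :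
    (m : ℝ) < ⌈8 / (4 - R)⌉₊ + 24 / (4 - R) := by
  set K := ⌈8 / (4 - R)⌉₊
  have hR : 0 < 4 - R := by linarith
  rcases lt_or_ge m K with hmK | hKm
  · have : (m : ℝ) < K := by exact_mod_cast hmK
    linarith [div_pos (by norm_num : (0 : ℝ) < 24) hR]
  have hgrowth := ratio_growth hx hcomp hR1 hR4 (Nat.le_ceil _) m hKm le_rfl
  have hxm : 0 < (x m : ℝ) := by
    exact_mod_cast (Int.natCast_pos.mpr hm).trans_le (hx.natCast_le m le_rfl)
  have hratio : prefixSum x m / x m ≤ R :=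
    (div_le_iff₀ hxm).mpr (prefixSum_le_mul hx hcomp (by linarith) hm)
  have : ((m : ℝ) - K) * (4 - R) < 24 := by nlinarith
  rw [← lt_div_iff₀ hR] at this
  linarith

end IsCompetitive

/-- The online bidding lemma (Lemma 6.2, from Chrobak et al.): for every `R < 4` there
is a positive integer `B` such that every increasing sequence of integers
`0 = x 0 < x 1 < ⋯ < x m = B` (with `m ≥ 1`) has an index `1 ≤ k ≤ m` with
`∑_{i=0}^{k} x i > R · (x (k-1) + 1)`. -/
theorem stmt11 (R : ℝ) (hR : R < 4) :
    ∃ B : ℕ, 0 < B ∧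
      ∀ (m : ℕ) (x : ℕ → ℤ), 1 ≤ m → x 0 = 0 → x m = B →
        (∀ i, i < m → x i < x (i + 1)) →
        ∃ k, 1 ≤ k ∧ k ≤ m ∧
          (∑ i ∈ Finset.range (k + 1), (x i : ℝ)) > R * ((x (k - 1) : ℝ) + 1) := by
  set R' := max R 1
  have hR' : R' < 4 := max_lt hR (by norm_num)
  set M := ⌈8 / (4 - R')⌉₊ + ⌈24 / (4 - R')⌉₊
  refine ⟨4 ^ M, by positivity, fun m x hm h0 hB hinc => ?_⟩
  by_contra! hcomp
  have hx : IsBidSequence x m := ⟨h0, hinc⟩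
  have hcomp' : IsCompetitive R' x m := IsCompetitive.mono hx hcomp (le_max_left _ _)
  have hlen := hcomp'.length_lt hx (le_max_right _ _) hR' hm
  have hmM : m ≤ M := by
    have : (m : ℝ) < M := by push_cast [M]; linarith [Nat.le_ceil (24 / (4 - R'))]
    exact_mod_cast this.le
  have hpow := hcomp'.add_one_le_four_pow hx hR' m le_rfl
  rw [hB] at hpow
  have : (4 : ℤ) ^ m ≤ 4 ^ M := pow_le_pow_right₀ (by norm_num) hmM
  push_cast at hpow
  omega
end

section
/- For every real R < 4 there exists a positive integer B with the following property. For every finite set S ⊆ ℝ≥0 × ℝ≥0 such that for every integer x ∈ {1,…,B} there is (t, y) ∈ S with t ≤ x and y ≥ x, there exists a real θ with 1 ≤ θ such that ∑_{(t,y)∈S, t ≤ θ} y > R · ⌊min(θ, B)⌋. -/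
/-!
Fix a witness service `w x` for every request `x ≤ B`, start at the integer time `τ₀ = N` and
let `τₖ₊₁ = ⌊yₖ⌋ + 1`, where `yₖ` is the reach of `w τₖ`. The reaches strictly increase, so these
services are distinct and all start by time `τₖ₊₁`; if the schedule were `R`-competitive, then
`y₀ + ⋯ + yₖ₊₁ ≤ R τₖ₊₁ ≤ R (yₖ + 1) ≤ c yₖ` with `c = (R + 4) / 2 < 4` once `N` is large.
For the partial sums `sₖ` this reads `sₖ₊₁ ≤ c (sₖ - sₖ₋₁)`, so by AM-GM the ratios
`sₖ₊₁ / sₖ > 1` decrease by at least `2√c - c > 0` at each step, which cannot go on for long.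
The times grow at most by a factor `5` per step, so `B = N · 5 ^ L` covers all the requests used.
-/

open Finset

lemma div_le_div_sub_of_le_mul_sub {c u v w : ℝ} (hc : 0 ≤ c) (hu : 0 < u) (hv : 0 < v)
    (h : w ≤ c * (v - u)) : w / v ≤ v / u - (2 * √c - c) := by
  have hsq := sq_nonneg (v - √c * u)
  rw [sub_sq, mul_pow, Real.sq_sqrt hc] at hsq
  rw [div_le_iff₀ hv, sub_mul, div_mul_eq_mul_div, le_sub_iff_add_le, le_div_iff₀ hu]
  nlinarith [mul_le_mul_of_nonneg_right h hu.le]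

theorem exists_mul_lt_sum_range_of_lt_four {c : ℝ} (hc : c < 4) :
    ∃ L : ℕ, ∀ y : ℕ → ℝ, (∀ k ≤ L, 0 < y k) →
      ∃ k < L, c * y k < ∑ i ∈ range (k + 2), y i := by
  set c' := max c 1
  have hc'1 : 1 ≤ c' := le_max_right c 1
  have hc'4 : c' < 4 := max_lt hc (by norm_num)
  set δ := 2 * √c' - c'
  have hδ : 0 < δ := by
    have hsqrt_pos : 0 < √c' := Real.sqrt_pos.2 (by linarith)
    have hsqrt_lt : √c' < 2 := (Real.sqrt_lt' (by norm_num)).2 (by linarith)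
    nlinarith [Real.sq_sqrt (by linarith : 0 ≤ c')]
  obtain ⟨n, hn⟩ := exists_nat_gt (c' / δ)
  refine ⟨n + 1, fun y hy => ?_⟩
  by_contra! hbound
  set s : ℕ → ℝ := fun k => ∑ i ∈ range (k + 1), y i
  have hs : ∀ k ≤ n + 1, 0 < s k := fun k hk =>
    sum_pos (fun i hi => hy i (by rw [mem_range] at hi; omega)) nonempty_range_add_one
  have hbound' : ∀ k ≤ n, s (k + 1) ≤ c' * y k := fun k hk =>
    (hbound k (by omega)).trans (by gcongr; exacts [(hy k (by omega)).le, le_max_left c 1])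
  have hratio : ∀ k ≤ n, s (k + 1) / s k ≤ c' - k * δ := by
    intro k hk
    induction k with
    | zero =>
      rw [div_le_iff₀ (hs 0 (by omega))]
      simpa [s] using hbound' 0 hk
    | succ k ih =>
      have hstep := div_le_div_sub_of_le_mul_sub (c := c') (w := s (k + 2)) (by linarith)
        (hs k (by omega)) (hs (k + 1) (by omega))
        (by simpa [s, sum_range_succ _ (k + 1)] using hbound' (k + 1) hk)
      push_cast
      linarith [ih (by omega)]
  have hgrow : 1 < s (n + 1) / s n := by
    rw [one_lt_div (hs n (by omega))]
    simpa [s, sum_range_succ _ (n + 1)] using hy (n + 1) le_rfl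
  linarith [hratio n le_rfl, (div_lt_iff₀ hδ).1 hn]

noncomputable def costBy (S : Finset (ℝ × ℝ)) (θ : ℝ) : ℝ :=
  ∑ p ∈ S.filter (fun p => p.1 ≤ θ), p.2

lemma sum_le_costBy {S : Finset (ℝ × ℝ)} (hS : ∀ p ∈ S, 0 ≤ p.2) {θ : ℝ} {ι : Type*}
    {I : Finset ι} {q : ι → ℝ × ℝ} (hq : ∀ i ∈ I, q i ∈ S ∧ (q i).1 ≤ θ)
    (hinj : Set.InjOn q I) : ∑ i ∈ I, (q i).2 ≤ costBy S θ := by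
  classical
  rw [← sum_image (f := Prod.snd) hinj]
  refine sum_le_sum_of_subset_of_nonneg (fun p hp => ?_) fun p hp _ => hS p (mem_filter.1 hp).1
  obtain ⟨i, hi, rfl⟩ := mem_image.1 hp
  exact mem_filter.2 (hq i hi)

noncomputable def greedyTime (w : ℕ → ℝ × ℝ) (N k : ℕ) : ℕ :=
  (fun x => ⌊(w x).2⌋₊ + 1)^[k] N

noncomputable def greedyReach (w : ℕ → ℝ × ℝ) (N k : ℕ) : ℝ :=
  (w (greedyTime w N k)).2

section Greedy

variable {S : Finset (ℝ × ℝ)} {w : ℕ → ℝ × ℝ} {N B n : ℕ} {R : ℝ}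

lemma greedyTime_succ (k : ℕ) : greedyTime w N (k + 1) = ⌊greedyReach w N k⌋₊ + 1 :=
  Function.iterate_succ_apply' _ k N

lemma one_le_greedyTime (hN : 1 ≤ N) (k : ℕ) : 1 ≤ greedyTime w N k := by
  cases k with
  | zero => exact hN
  | succ k => rw [greedyTime_succ]; omega

lemma greedyReach_lt_greedyTime_succ (k : ℕ) : greedyReach w N k < greedyTime w N (k + 1) := by
  rw [greedyTime_succ]; push_cast; exact Nat.lt_floor_add_one _

lemma greedyTime_succ_le {k : ℕ} (hk : 0 ≤ greedyReach w N k) :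
    (greedyTime w N (k + 1) : ℝ) ≤ greedyReach w N k + 1 := by
  rw [greedyTime_succ]; push_cast; linarith [Nat.floor_le hk]

variable (hS : ∀ p ∈ S, 0 ≤ p.2)
  (hw : ∀ x : ℕ, 1 ≤ x → x ≤ B → w x ∈ S ∧ (w x).1 ≤ x ∧ (x : ℝ) ≤ (w x).2)
  (hcost : ∀ x : ℕ, 1 ≤ x → x ≤ B → costBy S x ≤ R * x)
  (hN : 1 ≤ N) (hR : R ≤ 4) (hB : N * 5 ^ n ≤ B)
include hS hw hcost hN hR hB

lemma greedyTime_le_pow {k : ℕ} (hk : k ≤ n) : greedyTime w N k ≤ N * 5 ^ k := by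
  induction k with
  | zero => simp [greedyTime]
  | succ k ih =>
    set τ := greedyTime w N k
    have hτ1 : 1 ≤ τ := one_le_greedyTime hN k
    have hτ : τ ≤ N * 5 ^ k := ih (by omega)
    have hτB : τ ≤ B :=
      hτ.trans <| (Nat.mul_le_mul_left N (Nat.pow_le_pow_right (by norm_num) (by omega))).trans hB
    obtain ⟨hwS, hwt, hwy⟩ := hw τ hτ1 hτB
    have : (greedyTime w N (k + 1) : ℝ) ≤ 5 * τ := calc
      (greedyTime w N (k + 1) : ℝ) ≤ (w τ).2 + 1 :=
          greedyTime_succ_le ((Nat.cast_nonneg τ).trans hwy)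
      _ ≤ costBy S τ + 1 := by
          gcongr
          exact single_le_sum (fun p hp => hS p (mem_filter.1 hp).1) (mem_filter.2 ⟨hwS, hwt⟩)
      _ ≤ R * τ + 1 := by gcongr; exact hcost τ hτ1 hτB
      _ ≤ 5 * τ := by nlinarith [(Nat.one_le_cast (α := ℝ)).2 hτ1]
    have : greedyTime w N (k + 1) ≤ 5 * τ := by exact_mod_cast this
    rw [pow_succ]
    linarith

lemma greedyTime_le {k : ℕ} (hk : k ≤ n) : greedyTime w N k ≤ B :=
  (greedyTime_le_pow hS hw hcost hN hR hB hk).trans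
    ((Nat.mul_le_mul_left N (Nat.pow_le_pow_right (by norm_num) hk)).trans hB)

lemma greedyTime_serves {k : ℕ} (hk : k ≤ n) :
    w (greedyTime w N k) ∈ S ∧ (w (greedyTime w N k)).1 ≤ greedyTime w N k ∧
      (greedyTime w N k : ℝ) ≤ greedyReach w N k :=
  hw _ (one_le_greedyTime hN k) (greedyTime_le hS hw hcost hN hR hB hk)

lemma strictMonoOn_greedyTime : StrictMonoOn (greedyTime w N) (Set.Iic n) :=
  strictMonoOn_Iic_of_lt_succ fun k hk => by
    exact_mod_cast (greedyTime_serves hS hw hcost hN hR hB hk.le).2.2.trans_lt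
      (greedyReach_lt_greedyTime_succ k)

lemma strictMonoOn_greedyReach : StrictMonoOn (greedyReach w N) (Set.Iic n) :=
  strictMonoOn_Iic_of_lt_succ fun k hk =>
    (greedyReach_lt_greedyTime_succ k).trans_le (greedyTime_serves hS hw hcost hN hR hB hk).2.2

lemma natCast_le_greedyReach {k : ℕ} (hk : k ≤ n) : (N : ℝ) ≤ greedyReach w N k :=
  calc (N : ℝ) = greedyTime w N 0 := rfl
    _ ≤ greedyTime w N k := by
        exact_mod_cast (strictMonoOn_greedyTime hS hw hcost hN hR hB).monotoneOn
          (Set.mem_Iic.2 (Nat.zero_le n)) hk (Nat.zero_le k)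
    _ ≤ greedyReach w N k := (greedyTime_serves hS hw hcost hN hR hB hk).2.2

lemma sum_greedyReach_le (hR0 : 0 ≤ R) {k : ℕ} (hk : k < n) :
    ∑ i ∈ range (k + 2), greedyReach w N i ≤ R * (greedyReach w N k + 1) := by
  have hserves := fun i (hi : i ≤ n) => greedyTime_serves hS hw hcost hN hR hB hi
  have hrange : ∀ i ∈ range (k + 2), i ≤ n := fun i hi => by rw [mem_range] at hi; omega
  calc ∑ i ∈ range (k + 2), greedyReach w N i ≤ costBy S (greedyTime w N (k + 1)) := by
        refine sum_le_costBy hS (fun i hi => ⟨(hserves i (hrange i hi)).1,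
          (hserves i (hrange i hi)).2.1.trans ?_⟩) fun i hi j hj hij => ?_
        · exact_mod_cast (strictMonoOn_greedyTime hS hw hcost hN hR hB).monotoneOn (hrange i hi)
            (Set.mem_Iic.2 hk) (by rw [mem_range] at hi; omega)
        · exact (strictMonoOn_greedyReach hS hw hcost hN hR hB).injOn (hrange i hi) (hrange j hj)
            (congrArg Prod.snd hij)
    _ ≤ R * greedyTime w N (k + 1) :=
        hcost _ (one_le_greedyTime hN _) (greedyTime_le hS hw hcost hN hR hB hk)
    _ ≤ R * (greedyReach w N k + 1) := by
        gcongr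
        exact greedyTime_succ_le ((Nat.cast_nonneg _).trans (hserves k hk.le).2.2)

end Greedy

/-- Lower bound of `4` for online MLAP-D on the line (via Single-Phase MLAP-D): for
every `R < 4` there is a positive integer `B` such that for every schedule `S`
(a finite set of services `(t, y)`, serving `[0, y]` at time `t`) that serves each
request at point `x ∈ {1, …, B}` (issued at time `0` with deadline `x`) by its
deadline, there is an expiration time `θ ≥ 1` at which the schedule's cost so far
exceeds `R` times the optimum cost `⌊min(θ, B)⌋`. -/
theorem stmt12 (R : ℝ) (hR : R < 4) :
    ∃ B : ℕ, 0 < B ∧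
      ∀ S : Finset (ℝ × ℝ),
        (∀ p ∈ S, 0 ≤ p.1 ∧ 0 ≤ p.2) →
        (∀ x : ℕ, 1 ≤ x → x ≤ B → ∃ p ∈ S, p.1 ≤ (x : ℝ) ∧ (x : ℝ) ≤ p.2) →
        ∃ θ : ℝ, 1 ≤ θ ∧
          (∑ p ∈ S.filter (fun p => p.1 ≤ θ), p.2) > R * (⌊min θ (B : ℝ)⌋ : ℝ) := by
  set R₁ := max R 0
  have hR₁ : R₁ < 4 := max_lt hR four_pos
  obtain ⟨L, hL⟩ := exists_mul_lt_sum_range_of_lt_four (c := (R₁ + 4) / 2) (by linarith)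
  set N := ⌈2 * R₁ / (4 - R₁)⌉₊ + 1
  have hN1 : 1 ≤ N := Nat.le_add_left 1 _
  have hN : 2 * R₁ / (4 - R₁) ≤ N := (Nat.le_ceil _).trans (by exact_mod_cast Nat.le_succ _)
  refine ⟨N * 5 ^ L, by positivity, fun S hS hcov => ?_⟩
  by_contra! hopt
  have hcost : ∀ x : ℕ, 1 ≤ x → x ≤ N * 5 ^ L → costBy S x ≤ R₁ * x := fun x hx1 hxB => by
    have hfloor : ⌊min (x : ℝ) ((N * 5 ^ L : ℕ) : ℝ)⌋ = x := by
      rw [min_eq_left (by exact_mod_cast hxB), Int.floor_natCast]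
    have := hopt x (by exact_mod_cast hx1)
    rw [hfloor, Int.cast_natCast] at this
    exact this.trans (by gcongr; exact le_max_left R 0)
  choose! w hwS hw using hcov
  have hserve : ∀ x : ℕ, 1 ≤ x → x ≤ N * 5 ^ L → w x ∈ S ∧ (w x).1 ≤ x ∧ (x : ℝ) ≤ (w x).2 :=
    fun x hx1 hxB => ⟨hwS x hx1 hxB, hw x hx1 hxB⟩
  have hS₂ : ∀ p ∈ S, 0 ≤ p.2 := fun p hp => (hS p hp).2
  obtain ⟨k, hk, hlt⟩ := hL (greedyReach w N) fun k hk => (Nat.cast_pos.2 hN1).trans_le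
    (natCast_le_greedyReach hS₂ hserve hcost hN1 hR₁.le le_rfl hk)
  have hreach := natCast_le_greedyReach hS₂ hserve hcost hN1 hR₁.le le_rfl hk.le
  have hsum := sum_greedyReach_le hS₂ hserve hcost hN1 hR₁.le le_rfl (le_max_right R 0) hk
  have hlarge : 2 * R₁ ≤ (4 - R₁) * greedyReach w N k :=
    (div_le_iff₀' (by linarith)).1 (hN.trans hreach)
  linarith
end

section
/- For every real R < 4 there exists a positive integer B with the following property. For a finite set S ⊆ ℝ≥0 × ℝ≥0 and a real θ > 0 define cost(S, θ) = ∑_{(t,y)∈S, t ≤ θ} y + ∑_{x=1}^{B} 6^{B−x} · inf({t | (t, y) ∈ S, t ≤ θ, y ≥ x} ∪ {θ}). Then for every finite S ⊆ ℝ≥0 × ℝ≥0 there exists θ > 0 such that cost(S, θ) > R · inf{cost(S', θ) | S' ⊆ ℝ≥0 × ℝ≥0 finite}. -/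
/-
Suppose a schedule `S` were `R`-competitive at every expiration time `θ`; in particular it
would cost at most `R` times the static schedule serving `[0, k]` at time `0`, whose cost is
`k + θ * tailWeight B (k + 1)`. If no service of `S` reaches `B`, a huge `θ` is fatal; if a
positive service is made at time `0`, a tiny `θ` is. Otherwise follow the record services
`(tᵢ, yᵢ)`, `yᵢ₊₁` being the earliest service larger than `yᵢ`. At `θ = tᵢ₊₁` the schedule has
paid `y₁ + ⋯ + yᵢ₊₁`, and every request beyond `yᵢ` has waited `θ`; since the weights
`6^(B-x)` decay geometrically, this makes serving `[0, yᵢ + K]` with `6^K ≥ R B` cost at most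
`yᵢ + K + 1`. So the partial sums `s` satisfy `s (i + 2) ≤ R (s (i + 1) - s i) + E` with
`E = R (K + 1) ≈ R log₆ B`. For `R < 4` the admissible ratio `s (i + 2) / s (i + 1)` then drops
by `2√R - R` at every step (AM-GM), which bounds `s` by `C(R) E`, far below `B = 6^n`.
-/

/-- The cost, by expiration time `θ`, of the schedule `S` (a finite set of services
`(t, y)`, serving `[0, y]` at time `t` at cost `y`) on the single-phase instance with
linear waiting costs in which `6^(B-x)` requests are issued at time `0` at each integer
point `x ∈ {1, …, B}`: the service cost of the services issued by time `θ`, plus, for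
each point `x`, `6^(B-x)` times the first time `t ≤ θ` at which some service `(t, y)`
with `y ≥ x` serves the point (a request unserved by time `θ` pays `θ`). -/
noncomputable def lineCost (B : ℕ) (S : Finset (ℝ × ℝ)) (θ : ℝ) : ℝ :=
  (∑ p ∈ S.filter (fun p => p.1 ≤ θ), p.2)
    + ∑ x ∈ Finset.Icc 1 B, (6 : ℝ) ^ (B - x) *
        sInf ({t : ℝ | ∃ p ∈ S, p.1 = t ∧ t ≤ θ ∧ (x : ℝ) ≤ p.2} ∪ {θ})

open Finset

noncomputable def tailWeight (B k : ℕ) : ℝ := ∑ x ∈ Icc k B, (6 : ℝ) ^ (B - x)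

lemma tailWeight_eq (B k : ℕ) : tailWeight B k = ((6 : ℝ) ^ (B + 1 - k) - 1) / 5 := by
  rw [tailWeight, ← Ico_add_one_right_eq_Icc, sum_Ico_reflect _ _ le_rfl, Nat.sub_self,
    Nat.Ico_zero_eq_range, geom_sum_eq (by norm_num)]
  norm_num

lemma tailWeight_nonneg (B k : ℕ) : 0 ≤ tailWeight B k :=
  sum_nonneg fun _ _ => by positivity

@[simp] lemma tailWeight_self (B : ℕ) : tailWeight B B = 1 := by
  simp [tailWeight]

@[simp] lemma tailWeight_succ_self (B : ℕ) : tailWeight B (B + 1) = 0 := by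
  simp [tailWeight]

lemma pow_mul_tailWeight_add_le (B k K : ℕ) :
    (6 : ℝ) ^ K * tailWeight B (k + K) ≤ tailWeight B k := by
  rcases le_or_gt (k + K) (B + 1) with h | h
  · rw [tailWeight_eq, tailWeight_eq, mul_div_assoc', mul_sub, mul_one, ← pow_add,
      show K + (B + 1 - (k + K)) = B + 1 - k by omega]
    gcongr
    exact one_le_pow₀ (by norm_num)
  · rw [tailWeight_eq B (k + K), show B + 1 - (k + K) = 0 by omega]
    simpa using tailWeight_nonneg B k

lemma le_mul_add_of_mul_tailWeight_le {R c θ : ℝ} {B K x : ℕ} (hR : 0 ≤ R) (hθ : 0 ≤ θ)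
    (hc : ∀ k : ℕ, c ≤ R * (k + θ * tailWeight B (k + 1))) (hK : R * B ≤ 6 ^ K)
    (hx : θ * tailWeight B (x + 1) ≤ c) : c ≤ R * (x + K + 1) := by
  have hcB : c ≤ R * B := by simpa using hc B
  have hsmall : θ * tailWeight B (x + 1 + K) ≤ 1 := by
    have := mul_le_mul_of_nonneg_left (pow_mul_tailWeight_add_le B (x + 1) K) hθ
    have h6 : (0 : ℝ) < 6 ^ K := by positivity
    nlinarith
  calc c ≤ R * ((x + K : ℕ) + θ * tailWeight B (x + K + 1)) := hc (x + K)
    _ ≤ R * (x + K + 1) := by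
      rw [show x + K + 1 = x + 1 + K by omega]
      push_cast
      gcongr

noncomputable def serviceCost (S : Finset (ℝ × ℝ)) (θ : ℝ) : ℝ :=
  ∑ p ∈ S.filter (fun p => p.1 ≤ θ), p.2

noncomputable def waitTime (S : Finset (ℝ × ℝ)) (θ : ℝ) (x : ℕ) : ℝ :=
  sInf ({t : ℝ | ∃ p ∈ S, p.1 = t ∧ t ≤ θ ∧ (x : ℝ) ≤ p.2} ∪ {θ})

lemma lineCost_eq (B : ℕ) (S : Finset (ℝ × ℝ)) (θ : ℝ) :
    lineCost B S θ = serviceCost S θ + ∑ x ∈ Icc 1 B, (6 : ℝ) ^ (B - x) * waitTime S θ x :=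
  rfl

section WaitTime

variable {S : Finset (ℝ × ℝ)} {θ : ℝ} {x : ℕ}

lemma bddBelow_waitTime_set :
    BddBelow ({t : ℝ | ∃ p ∈ S, p.1 = t ∧ t ≤ θ ∧ (x : ℝ) ≤ p.2} ∪ {θ}) := by
  refine Set.Finite.bddBelow (((S.image Prod.fst).finite_toSet.union
    (Set.finite_singleton θ)).subset ?_)
  rintro t (⟨p, hp, rfl, -⟩ | rfl)
  · exact Or.inl (mem_image_of_mem _ hp)
  · exact Or.inr rfl

lemma waitTime_le_self : waitTime S θ x ≤ θ :=
  csInf_le bddBelow_waitTime_set (Or.inr rfl)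

lemma waitTime_le {p : ℝ × ℝ} (hp : p ∈ S) (hpθ : p.1 ≤ θ) (hpx : (x : ℝ) ≤ p.2) :
    waitTime S θ x ≤ p.1 :=
  csInf_le bddBelow_waitTime_set (Or.inl ⟨p, hp, rfl, hpθ, hpx⟩)

lemma le_waitTime (h : ∀ p ∈ S, p.1 < θ → p.2 < x) : θ ≤ waitTime S θ x := by
  refine le_csInf ⟨θ, Or.inr rfl⟩ ?_
  rintro t (⟨p, hp, rfl, -, hpx⟩ | rfl)
  · exact not_lt.1 fun hpθ => (h p hp hpθ).not_ge hpx
  · exact le_rfl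

lemma waitTime_nonneg (hS : ∀ p ∈ S, 0 ≤ p.1) (hθ : 0 ≤ θ) : 0 ≤ waitTime S θ x := by
  refine le_csInf ⟨θ, Or.inr rfl⟩ ?_
  rintro t (⟨p, hp, rfl, -⟩ | rfl)
  · exact hS p hp
  · exact hθ

end WaitTime

section LineCost

variable {B : ℕ} {S : Finset (ℝ × ℝ)} {θ : ℝ}

lemma serviceCost_nonneg (hS : ∀ p ∈ S, 0 ≤ p.2) : 0 ≤ serviceCost S θ :=
  sum_nonneg fun p hp => hS p (mem_filter.1 hp).1

lemma sum_mul_waitTime_nonneg (hS : ∀ p ∈ S, 0 ≤ p.1) (hθ : 0 ≤ θ) :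
    0 ≤ ∑ x ∈ Icc 1 B, (6 : ℝ) ^ (B - x) * waitTime S θ x :=
  sum_nonneg fun _ _ => mul_nonneg (by positivity) (waitTime_nonneg hS hθ)

lemma lineCost_nonneg (hS : ∀ p ∈ S, 0 ≤ p.1 ∧ 0 ≤ p.2) (hθ : 0 ≤ θ) : 0 ≤ lineCost B S θ :=
  add_nonneg (serviceCost_nonneg fun p hp => (hS p hp).2)
    (sum_mul_waitTime_nonneg (fun p hp => (hS p hp).1) hθ)

lemma serviceCost_le_lineCost (hS : ∀ p ∈ S, 0 ≤ p.1) (hθ : 0 ≤ θ) :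
    serviceCost S θ ≤ lineCost B S θ :=
  le_add_of_nonneg_right (sum_mul_waitTime_nonneg hS hθ)

lemma snd_le_lineCost (hS : ∀ p ∈ S, 0 ≤ p.1 ∧ 0 ≤ p.2) (hθ : 0 ≤ θ) {q : ℝ × ℝ} (hq : q ∈ S)
    (hqθ : q.1 ≤ θ) : q.2 ≤ lineCost B S θ :=
  (single_le_sum (fun p hp => (hS p (mem_filter.1 hp).1).2) (mem_filter.2 ⟨hq, hqθ⟩)).trans
    (serviceCost_le_lineCost (fun p hp => (hS p hp).1) hθ)

lemma mul_tailWeight_le_lineCost (hS : ∀ p ∈ S, 0 ≤ p.1 ∧ 0 ≤ p.2) (hθ : 0 ≤ θ) {k : ℕ}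
    (hk : 1 ≤ k) (h : ∀ p ∈ S, p.1 < θ → p.2 < k) : θ * tailWeight B k ≤ lineCost B S θ := by
  have hwait : θ * tailWeight B k ≤ ∑ x ∈ Icc k B, (6 : ℝ) ^ (B - x) * waitTime S θ x := by
    rw [tailWeight, mul_sum]
    refine sum_le_sum fun x hx => ?_
    rw [mul_comm]
    refine mul_le_mul_of_nonneg_left (le_waitTime fun p hp hpθ => ?_) (by positivity)
    exact (h p hp hpθ).trans_le (by exact_mod_cast (mem_Icc.1 hx).1)
  refine hwait.trans ((sum_le_sum_of_subset_of_nonneg (Icc_subset_Icc_left hk) ?_).trans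
    (le_add_of_nonneg_left (serviceCost_nonneg fun p hp => (hS p hp).2)))
  exact fun _ _ _ => mul_nonneg (by positivity) (waitTime_nonneg (fun p hp => (hS p hp).1) hθ)

lemma lineCost_singleton_le (y : ℕ) (hθ : 0 ≤ θ) :
    lineCost B {((0 : ℝ), (y : ℝ))} θ ≤ y + θ * tailWeight B (y + 1) := by
  have hserve : serviceCost {((0 : ℝ), (y : ℝ))} θ = y := by
    simp [serviceCost, filter_singleton, hθ]
  have hwait : ∀ x ∈ Icc 1 B, (6 : ℝ) ^ (B - x) * waitTime {((0 : ℝ), (y : ℝ))} θ x ≤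
      if y < x then (6 : ℝ) ^ (B - x) * θ else 0 := by
    intro x _
    split_ifs with hxy
    · exact mul_le_mul_of_nonneg_left waitTime_le_self (by positivity)
    · refine mul_nonpos_of_nonneg_of_nonpos (by positivity) (waitTime_le (mem_singleton_self _)
        hθ ?_)
      exact (Nat.cast_le.2 (not_lt.1 hxy) : (x : ℝ) ≤ y)
  have htail : ∑ x ∈ Icc 1 B, (if y < x then (6 : ℝ) ^ (B - x) * θ else 0) =
      θ * tailWeight B (y + 1) := by
    rw [← sum_filter, tailWeight, mul_sum]
    refine sum_congr ?_ fun _ _ => mul_comm _ _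
    ext x
    simp only [mem_filter, mem_Icc]
    omega
  rw [lineCost_eq, hserve, ← htail]
  exact add_le_add_right (sum_le_sum hwait) _

end LineCost

def IsRecordChain (S : Finset (ℝ × ℝ)) (p : ℕ → ℝ × ℝ) (m : ℕ) : Prop :=
  ∀ i < m, p (i + 1) ∈ S ∧ (p i).2 < (p (i + 1)).2 ∧ ∀ q ∈ S, q.1 < (p (i + 1)).1 → q.2 ≤ (p i).2

/-- Greedily take the earliest service exceeding the current size: the sizes strictly increase
inside the finite set `S.image Prod.snd`, so they eventually reach `b`. -/
lemma exists_isRecordChain (S : Finset (ℝ × ℝ)) (p₀ : ℝ × ℝ) {b : ℝ} (hb : ∃ q ∈ S, b ≤ q.2) :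
    ∃ p m, p 0 = p₀ ∧ IsRecordChain S p m ∧ b ≤ (p m).2 := by
  have hnext : ∀ y : ℝ, ∃ r : ℝ × ℝ, (∃ q ∈ S, y < q.2) →
      r ∈ S ∧ y < r.2 ∧ ∀ q ∈ S, y < q.2 → r.1 ≤ q.1 := by
    intro y
    by_cases hy : ∃ q ∈ S, y < q.2
    · obtain ⟨r, hr, hmin⟩ := exists_min_image (S.filter (y < ·.2)) Prod.fst
        (by simpa [Finset.Nonempty] using hy)
      exact ⟨r, fun _ => ⟨(mem_filter.1 hr).1, (mem_filter.1 hr).2,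
        fun q hq hyq => hmin q (mem_filter.2 ⟨hq, hyq⟩)⟩⟩
    · exact ⟨p₀, fun h => absurd h hy⟩
  choose next hnext using hnext
  set p : ℕ → ℝ × ℝ := fun i => (fun r => next r.2)^[i] p₀
  have hp_succ : ∀ i, p (i + 1) = next (p i).2 := fun i => Function.iterate_succ_apply' _ _ _
  have hstep : ∀ i, (p i).2 < b → p (i + 1) ∈ S ∧ (p i).2 < (p (i + 1)).2 ∧
      ∀ q ∈ S, (p i).2 < q.2 → (p (i + 1)).1 ≤ q.1 := by
    intro i hi
    obtain ⟨q, hq, hbq⟩ := hb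
    rw [hp_succ]
    exact hnext _ ⟨q, hq, hi.trans_le hbq⟩
  have hreach : ∃ m, b ≤ (p m).2 := by
    by_contra! hlt
    have hmono : StrictMono fun i => (p (i + 1)).2 :=
      strictMono_nat_of_lt_succ fun i => (hstep (i + 1) (hlt _)).2.1
    refine Set.infinite_range_of_injective hmono.injective
      (((S.image Prod.snd).finite_toSet).subset ?_)
    rintro _ ⟨i, rfl⟩
    exact mem_image_of_mem _ (hstep i (hlt i)).1
  refine ⟨p, Nat.find hreach, rfl, fun i hi => ?_, Nat.find_spec hreach⟩
  obtain ⟨hmem, hlt, hmin⟩ := hstep i (not_le.1 (Nat.find_min hreach hi))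
  exact ⟨hmem, hlt, fun q hq hqt => not_lt.1 fun hq' => (hmin q hq hq').not_gt hqt⟩

namespace IsRecordChain

variable {S : Finset (ℝ × ℝ)} {p : ℕ → ℝ × ℝ} {m : ℕ}

lemma snd_lt (h : IsRecordChain S p m) {i j : ℕ} (hij : i < j) (hj : j ≤ m) :
    (p i).2 < (p j).2 := by
  induction j, hij using Nat.le_induction with
  | base => exact (h i hj).2.1
  | succ j hij ih => exact (ih (by omega)).trans (h j hj).2.1

lemma fst_le (h : IsRecordChain S p m) {i j : ℕ} (hij : i < j) (hj : j ≤ m) :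
    (p (i + 1)).1 ≤ (p j).1 := by
  obtain ⟨k, rfl⟩ : ∃ k, j = k + 1 := ⟨j - 1, by omega⟩
  refine not_lt.1 fun hlt => ?_
  exact ((h i (by omega)).2.2 _ (h k (by omega)).1 hlt).not_gt (h.snd_lt hij hj)

lemma sum_snd_le_serviceCost (h : IsRecordChain S p m) (hS : ∀ q ∈ S, 0 ≤ q.2) {i : ℕ}
    (hi : i ≤ m) : ∑ j ∈ range i, (p (j + 1)).2 ≤ serviceCost S (p i).1 := by
  have hinj : Set.InjOn (fun j => p (j + 1)) (range i) := by
    intro j hj k hk hjk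
    by_contra hne
    rcases Nat.lt_or_gt_of_ne hne with hlt | hlt
    · exact (h.snd_lt (Nat.succ_lt_succ hlt) (by simp at hk; omega)).ne (congrArg Prod.snd hjk)
    · exact (h.snd_lt (Nat.succ_lt_succ hlt) (by simp at hj; omega)).ne' (congrArg Prod.snd hjk)
  rw [← sum_image (f := Prod.snd) hinj]
  refine sum_le_sum_of_subset_of_nonneg (fun q hq => ?_) fun q hq _ => hS q (mem_filter.1 hq).1
  obtain ⟨j, hj, rfl⟩ := mem_image.1 hq
  have hj : j < i := mem_range.1 hj
  exact mem_filter.2 ⟨(h j (by omega)).1, h.fst_le hj hi⟩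

lemma snd_nonneg (h : IsRecordChain S p m) (h0 : 0 ≤ (p 0).2) {i : ℕ} (hi : i ≤ m) :
    0 ≤ (p i).2 := by
  rcases Nat.eq_zero_or_pos i with rfl | hi0
  · exact h0
  · exact h0.trans (h.snd_lt hi0 hi).le

end IsRecordChain

/-- AM-GM `(2√R - c) c ≤ R` lets the admissible growth ratio drop by `2√R - R` per step. -/
lemma le_sub_mul_of_le_mul_sub {R a b c d : ℝ} (hR : 0 ≤ R) (ha : 0 ≤ a) (hb : 0 ≤ b)
    (hba : b ≤ c * a) (hd : d ≤ R * (b - a)) : d ≤ (c - (2 * √R - R)) * b := by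
  have hsq : √R ^ 2 = R := Real.sq_sqrt hR
  suffices (2 * √R - c) * b ≤ R * a by nlinarith
  rcases le_or_gt (2 * √R) c with hc | hc
  · nlinarith
  · have hamgm : (2 * √R - c) * c ≤ R := by nlinarith [sq_nonneg (c - √R)]
    calc (2 * √R - c) * b ≤ (2 * √R - c) * (c * a) := by gcongr
      _ = ((2 * √R - c) * c) * a := by ring
      _ ≤ R * a := by gcongr

lemma le_ceil_of_pos_of_le_mul_sub {R : ℝ} (hR0 : 0 < R) (hR4 : R < 4) {u : ℕ → ℝ} {N : ℕ}
    (hpos : ∀ k ≤ N, 0 < u k) (hrec : ∀ k, k + 2 ≤ N → u (k + 2) ≤ R * (u (k + 1) - u k)) :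
    N ≤ ⌈R / (2 * √R - R)⌉₊ + 1 := by
  set δ := 2 * √R - R
  have hδ : 0 < δ := by
    have hsq : √R ^ 2 = R := Real.sq_sqrt hR0.le
    have : √R < 2 := by rw [Real.sqrt_lt' (by norm_num)]; linarith
    nlinarith [Real.sqrt_pos.2 hR0]
  have hratio : ∀ k, k + 2 ≤ N → u (k + 2) ≤ (R - k * δ) * u (k + 1) := by
    intro k
    induction k with
    | zero =>
      intro hk
      rw [Nat.cast_zero, zero_mul, sub_zero]
      nlinarith [hrec 0 hk, hpos 0 (by omega)]
    | succ k ih =>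
      intro hk
      have := le_sub_mul_of_le_mul_sub hR0.le (hpos (k + 1) (by omega)).le
        (hpos (k + 2) (by omega)).le (ih (by omega)) (hrec (k + 1) hk)
      push_cast
      linarith
  obtain hN | ⟨k, rfl⟩ : N ≤ 1 ∨ ∃ k, N = k + 2 := by
    rcases le_or_gt N 1 with h | h
    exacts [Or.inl h, Or.inr ⟨N - 2, by omega⟩]
  · omega
  · have hc : 0 < R - k * δ := pos_of_mul_pos_left
      ((hpos (k + 2) le_rfl).trans_le (hratio k le_rfl)) (hpos (k + 1) (by omega)).le
    have : (k : ℝ) < R / δ := by rw [lt_div_iff₀ hδ]; linarith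
    have := Nat.lt_ceil.2 this
    omega

lemma add_le_pow_mul_add {R E : ℝ} {s : ℕ → ℝ} {m : ℕ} (hR0 : 0 ≤ R) (hR4 : R ≤ 4) (hE : 0 ≤ E) (hs : ∀ i ≤ m, 0 ≤ s i)
    (hrec : ∀ i, i + 2 ≤ m → s (i + 2) ≤ R * (s (i + 1) - s i) + E) {i : ℕ} (hi : 1 ≤ i) :
    ∀ k, i + k ≤ m → s (i + k) + E ≤ 4 ^ k * (s i + E) := by
  intro k
  induction k with
  | zero => simp
  | succ k ih =>
    intro hk
    obtain ⟨j, hj⟩ : ∃ j, i + k = j + 1 := ⟨i + k - 1, by omega⟩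
    have hrec' := hrec j (by omega)
    rw [← hj, show j + 2 = i + (k + 1) by omega] at hrec'
    have hsj := hs j (by omega)
    have hsk := hs (i + k) (by omega)
    calc s (i + (k + 1)) + E ≤ 4 * (s (i + k) + E) := by nlinarith
      _ ≤ 4 * (4 ^ k * (s i + E)) := by gcongr; exact ih (by omega)
      _ = 4 ^ (k + 1) * (s i + E) := by ring

/-- After the last index `a` with `s a ≤ E`, `u = s - E` is positive and obeys
`u (i + 2) ≤ R * (u (i + 1) - u i)`, so only boundedly many steps remain, along which
`s + E` at most quadruples per step. -/
lemma exists_bound_of_le_mul_sub {R : ℝ} (hR0 : 0 < R) (hR4 : R < 4) :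
    ∃ C : ℝ, ∀ (E : ℝ) (s : ℕ → ℝ) (m : ℕ), (∀ i ≤ m, 0 ≤ s i) → s 0 ≤ E → s 1 ≤ E →
      (∀ i, i + 2 ≤ m → s (i + 2) ≤ R * (s (i + 1) - s i) + E) → s m ≤ C * E := by
  refine ⟨2 * 4 ^ (⌈R / (2 * √R - R)⌉₊ + 2), fun E s m hs hs0 hs1 hrec => ?_⟩
  have hE : 0 ≤ E := (hs 0 (Nat.zero_le _)).trans hs0
  set a := Nat.findGreatest (fun i => s i ≤ E) m
  have ham : a ≤ m := Nat.findGreatest_le m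
  have hsa : s a ≤ E := Nat.findGreatest_spec (P := fun i => s i ≤ E) (Nat.zero_le m) hs0
  have habove : ∀ i, a < i → i ≤ m → E < s i := fun i hai him =>
    not_le.1 (Nat.findGreatest_is_greatest hai him)
  rcases ham.eq_or_lt with hma | hma
  · rw [← hma]
    nlinarith [one_le_pow₀ (n := ⌈R / (2 * √R - R)⌉₊ + 2) (by norm_num : (1 : ℝ) ≤ 4)]
  have ha : 1 ≤ a := by
    by_contra! ha0
    exact (hs1.trans_lt (habove 1 (by omega) (by omega))).false
  have hlen : m - (a + 1) ≤ ⌈R / (2 * √R - R)⌉₊ + 1 :=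
    le_ceil_of_pos_of_le_mul_sub hR0 hR4 (u := fun k => s (a + 1 + k) - E)
      (fun k hk => sub_pos.2 (habove _ (by omega) (by omega)))
      (fun k hk => by
        have := hrec (a + 1 + k) (by omega)
        simp only [show a + 1 + (k + 2) = a + 1 + k + 2 by omega,
          show a + 1 + (k + 1) = a + 1 + k + 1 by omega]
        linarith)
  have hgrow := add_le_pow_mul_add hR0.le hR4.le hE hs hrec ha (m - a) (by omega)
  rw [Nat.add_sub_cancel' ham] at hgrow
  calc s m ≤ 4 ^ (m - a) * (s a + E) := by linarith
    _ ≤ 4 ^ (⌈R / (2 * √R - R)⌉₊ + 2) * (E + E) := by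
      gcongr
      · linarith [hs a ham]
      · norm_num
      · omega
    _ = 2 * 4 ^ (⌈R / (2 * √R - R)⌉₊ + 2) * E := by ring

lemma exists_mul_add_two_lt_six_pow (C : ℝ) : ∃ n : ℕ, C * (n + 2) < 6 ^ n := by
  obtain ⟨n, hn⟩ := pow_unbounded_of_one_lt (2 * max C 0) (by norm_num : (1 : ℝ) < 3)
  refine ⟨n, ?_⟩
  have hbern : (n : ℝ) + 2 ≤ 2 * 2 ^ n := by
    have := one_add_mul_le_pow (a := (1 : ℝ)) (by norm_num) n
    norm_num at this
    linarith [one_le_pow₀ (n := n) (by norm_num : (1 : ℝ) ≤ 2)]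
  calc C * (n + 2) ≤ max C 0 * (n + 2) := by gcongr; exact le_max_left _ _
    _ ≤ max C 0 * (2 * 2 ^ n) := by gcongr
    _ = 2 * max C 0 * 2 ^ n := by ring
    _ < 3 ^ n * 2 ^ n := by gcongr
    _ = 6 ^ n := by rw [← mul_pow]; norm_num

section Adversary

variable {R : ℝ} {B : ℕ} {S : Finset (ℝ × ℝ)} (hS : ∀ p ∈ S, 0 ≤ p.1 ∧ 0 ≤ p.2)
  (hopt : ∀ θ > 0, ∀ k : ℕ, lineCost B S θ ≤ R * (k + θ * tailWeight B (k + 1)))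
include hS hopt

lemma exists_mem_le_snd (hR : 0 ≤ R) (hB : 1 ≤ B) : ∃ q ∈ S, (B : ℝ) ≤ q.2 := by
  by_contra! hsmall
  have hθ : 0 < R * B + 1 := by positivity
  have hlow := mul_tailWeight_le_lineCost (B := B) hS hθ.le hB fun q hq _ => hsmall q hq
  have hup := hopt _ hθ B
  simp only [tailWeight_self, tailWeight_succ_self] at hlow hup
  linarith

lemma fst_pos_of_snd_pos (hR : 0 ≤ R) {q : ℝ × ℝ} (hq : q ∈ S) (hq2 : 0 < q.2) : 0 < q.1 := by
  by_contra! hq1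
  have hW := tailWeight_nonneg B 1
  set θ := q.2 / (R * tailWeight B 1 + 1)
  have hθ : 0 < θ := by positivity
  have hθq : θ * (R * tailWeight B 1 + 1) = q.2 := div_mul_cancel₀ _ (by positivity)
  have hlow := snd_le_lineCost (B := B) hS hθ.le hq (hq1.trans hθ.le)
  have hup := hopt θ hθ 0
  simp only [Nat.cast_zero, zero_add] at hup
  nlinarith

lemma IsRecordChain.sum_snd_le {p : ℕ → ℝ × ℝ} {m K : ℕ} (hp : IsRecordChain S p m)
    (hp0 : (p 0).2 = 0) (hR : 0 ≤ R) (hK : R * B ≤ 6 ^ K) {i : ℕ} (hi : i < m) :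
    ∑ j ∈ range (i + 1), (p (j + 1)).2 ≤ R * (p i).2 + R * (K + 1) := by
  obtain ⟨hmem, hlt, hfirst⟩ := hp i hi
  have hy := hp.snd_nonneg hp0.ge hi.le
  have hθ : 0 < (p (i + 1)).1 := fst_pos_of_snd_pos hS hopt hR hmem (hy.trans_lt hlt)
  have hwait := mul_tailWeight_le_lineCost (B := B) hS hθ.le (Nat.le_add_left 1 ⌊(p i).2⌋₊)
    fun q hq hqθ => by push_cast; exact (hfirst q hq hqθ).trans_lt (Nat.lt_floor_add_one _)
  calc ∑ j ∈ range (i + 1), (p (j + 1)).2 ≤ serviceCost S (p (i + 1)).1 :=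
        hp.sum_snd_le_serviceCost (fun q hq => (hS q hq).2) hi
    _ ≤ lineCost B S (p (i + 1)).1 := serviceCost_le_lineCost (fun q hq => (hS q hq).1) hθ.le
    _ ≤ R * (⌊(p i).2⌋₊ + K + 1) := le_mul_add_of_mul_tailWeight_le hR hθ.le (hopt _ hθ) hK hwait
    _ ≤ R * (p i).2 + R * (K + 1) := by nlinarith [Nat.floor_le hy]

end Adversary

theorem exists_lt_lineCost {R : ℝ} (hR0 : 0 < R) (hR4 : R < 4) :
    ∃ B : ℕ, 0 < B ∧ ∀ S : Finset (ℝ × ℝ), (∀ p ∈ S, 0 ≤ p.1 ∧ 0 ≤ p.2) →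
      ∃ θ > 0, ∃ k : ℕ, R * (k + θ * tailWeight B (k + 1)) < lineCost B S θ := by
  obtain ⟨C, hC⟩ := exists_bound_of_le_mul_sub hR0 hR4
  obtain ⟨n, hn⟩ := exists_mul_add_two_lt_six_pow (C * R)
  refine ⟨6 ^ n, by positivity, fun S hS => ?_⟩
  by_contra! hopt
  have hB : ((6 ^ n : ℕ) : ℝ) = 6 ^ n := by norm_num
  have hK : R * ((6 ^ n : ℕ) : ℝ) ≤ 6 ^ (n + 1) := by
    rw [hB, pow_succ]; nlinarith [pow_pos (by norm_num : (0 : ℝ) < 6) n]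
  obtain ⟨p, m, hp0, hp, hpm⟩ := exists_isRecordChain S (0, 0)
    (exists_mem_le_snd hS hopt hR0.le (Nat.one_le_pow _ _ (by norm_num)))
  rw [hB] at hpm
  have hm : 0 < m := by
    refine Nat.pos_of_ne_zero fun hm0 => ?_
    subst hm0
    simp only [hp0] at hpm
    linarith [pow_pos (by norm_num : (0 : ℝ) < 6) n]
  have hstep := fun i hi => hp.sum_snd_le hS hopt (congrArg Prod.snd hp0) hR0.le hK (i := i) hi
  set s : ℕ → ℝ := fun i => ∑ j ∈ range i, (p (j + 1)).2
  have hs_succ : ∀ i, s (i + 1) = s i + (p (i + 1)).2 := fun i => sum_range_succ _ _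
  have hsize : ∀ j < m, 0 ≤ (p (j + 1)).2 := fun j hj =>
    hp.snd_nonneg (congrArg Prod.snd hp0).ge (by omega)
  have hs : ∀ i ≤ m, 0 ≤ s i := fun i hi =>
    sum_nonneg fun j hj => hsize j ((mem_range.1 hj).trans_le hi)
  have hsm := hC (R * ((n + 1 : ℕ) + 1)) s m hs
    (by simp [s]; positivity)
    (by simpa [s, hp0] using hstep 0 hm)
    (fun i hi => by
      have h : s (i + 2) ≤ R * (p (i + 1)).2 + R * ((n + 1 : ℕ) + 1) := hstep (i + 1) (by omega)
      rwa [hs_succ i, add_sub_cancel_left])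
  have hpm_le : (p m).2 ≤ s m := by
    obtain ⟨k, rfl⟩ : ∃ k, m = k + 1 := ⟨m - 1, by omega⟩
    linarith [hs_succ k, hs k (by omega)]
  push_cast at hsm
  nlinarith

/-- Lower bound of `4` for online MLAP with linear waiting costs on the line (via
Single-Phase MLAP-L): for every `R < 4` there is a positive integer `B` such that for
every schedule `S` there is an expiration time `θ > 0` at which the cost of `S` exceeds
`R` times the optimum cost for expiration time `θ`. -/
theorem stmt13 (R : ℝ) (hR : R < 4) :
    ∃ B : ℕ, 0 < B ∧
      ∀ S : Finset (ℝ × ℝ), (∀ p ∈ S, 0 ≤ p.1 ∧ 0 ≤ p.2) →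
        ∃ θ : ℝ, 0 < θ ∧
          lineCost B S θ >
            R * sInf {c : ℝ | ∃ S' : Finset (ℝ × ℝ),
              (∀ p ∈ S', 0 ≤ p.1 ∧ 0 ≤ p.2) ∧ c = lineCost B S' θ} := by
  obtain ⟨B, hB, hbeat⟩ := exists_lt_lineCost (R := max R 1) (by positivity)
    (max_lt hR (by norm_num))
  refine ⟨B, hB, fun S hS => ?_⟩
  obtain ⟨θ, hθ, k, hk⟩ := hbeat S hS
  refine ⟨θ, hθ, lt_of_le_of_lt ?_ hk⟩
  have hlb : ∀ c ∈ {c : ℝ | ∃ S' : Finset (ℝ × ℝ), (∀ p ∈ S', 0 ≤ p.1 ∧ 0 ≤ p.2) ∧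
      c = lineCost B S' θ}, 0 ≤ c := by
    rintro c ⟨S', hS', rfl⟩
    exact lineCost_nonneg hS' hθ.le
  have hsingle : lineCost B {((0 : ℝ), (k : ℝ))} θ ∈ {c : ℝ | ∃ S' : Finset (ℝ × ℝ),
      (∀ p ∈ S', 0 ≤ p.1 ∧ 0 ≤ p.2) ∧ c = lineCost B S' θ} :=
    ⟨_, by simp, rfl⟩
  have hopt_le := (csInf_le ⟨0, hlb⟩ hsingle).trans (lineCost_singleton_le k hθ.le)
  calc R * sInf _ ≤ max R 1 * sInf _ := by gcongr; exacts [Real.sInf_nonneg hlb, le_max_left _ _]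
    _ ≤ max R 1 * (k + θ * tailWeight B (k + 1)) := by gcongr
end

section
/- Let 𝒥 be a finite set of pairs (a, d) ∈ ℝ × ℝ with a ≤ d, each representing the closed interval [a, d]. Let T ⊆ ℝ and O ⊆ ℝ be finite sets such that for every (a, d) ∈ 𝒥, T ∩ [a, d] ≠ ∅ and O ∩ [a, d] ≠ ∅. Then there exists T' ⊆ T with |T'| ≤ 2·|O| such that T' ∩ [a, d] ≠ ∅ for every (a, d) ∈ 𝒥. -/
/-!
For each `o ∈ O` keep the nearest element of `T` on either side of `o`. An interval `[a, d]`
containing some `o ∈ O` and some `t ∈ T` also contains the nearest element of `T` on the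
side of `o` where `t` lies, since that element sits between `t` and `o`.
-/

namespace Finset

variable {α : Type*} [LinearOrder α]

theorem exists_card_le_one_mem_Icc_of_le (T : Finset α) (o : α) :
    ∃ S ⊆ T, S.card ≤ 1 ∧ ∀ t ∈ T, t ≤ o → ∃ s ∈ S, s ∈ Set.Icc t o := by
  by_cases hne : (T.filter (· ≤ o)).Nonempty
  · obtain ⟨hmem, hmax⟩ := (T.filter (· ≤ o)).isGreatest_max' hne
    rw [coe_filter, Set.mem_ofPred_eq] at hmem
    refine ⟨{(T.filter (· ≤ o)).max' hne}, singleton_subset_iff.2 hmem.1, (card_singleton _).le,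
      fun t ht hto => ⟨_, mem_singleton_self _, hmax (by simp [ht, hto]), hmem.2⟩⟩
  · refine ⟨∅, empty_subset T, by simp, fun t ht hto => absurd ⟨t, ?_⟩ hne⟩
    simp [ht, hto]

theorem exists_card_le_one_mem_Icc_of_ge (T : Finset α) (o : α) :
    ∃ S ⊆ T, S.card ≤ 1 ∧ ∀ t ∈ T, o ≤ t → ∃ s ∈ S, s ∈ Set.Icc o t := by
  obtain ⟨S, hST, hcard, hS⟩ := exists_card_le_one_mem_Icc_of_le (α := αᵒᵈ) T o
  exact ⟨S, hST, hcard, fun t ht hot => (hS t ht hot).imp fun _ h => ⟨h.1, h.2.2, h.2.1⟩⟩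

theorem exists_card_le_two_mem_uIcc (T : Finset α) (o : α) :
    ∃ S ⊆ T, S.card ≤ 2 ∧ ∀ t ∈ T, ∃ s ∈ S, s ∈ Set.uIcc t o := by
  classical
  obtain ⟨L, hLT, hL, hLo⟩ := exists_card_le_one_mem_Icc_of_le T o
  obtain ⟨U, hUT, hU, hUo⟩ := exists_card_le_one_mem_Icc_of_ge T o
  refine ⟨L ∪ U, union_subset hLT hUT, (card_union_le L U).trans (add_le_add hL hU), ?_⟩
  intro t ht
  rcases le_total t o with hto | hot
  · obtain ⟨s, hs, hst⟩ := hLo t ht hto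
    exact ⟨s, mem_union_left U hs, Set.Icc_subset_uIcc hst⟩
  · obtain ⟨s, hs, hst⟩ := hUo t ht hot
    exact ⟨s, mem_union_right L hs, Set.Icc_subset_uIcc' hst⟩

end Finset

theorem stmt14_general (𝒥 : Finset (ℝ × ℝ))
    (T O : Finset ℝ)
    (hT : ∀ p ∈ 𝒥, ∃ s ∈ T, p.1 ≤ s ∧ s ≤ p.2)
    (hO : ∀ p ∈ 𝒥, ∃ s ∈ O, p.1 ≤ s ∧ s ≤ p.2) :
    ∃ T' ⊆ T, T'.card ≤ 2 * O.card ∧ ∀ p ∈ 𝒥, ∃ s ∈ T', p.1 ≤ s ∧ s ≤ p.2 := by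
  choose S hST hcard hS using T.exists_card_le_two_mem_uIcc
  refine ⟨O.biUnion S, Finset.biUnion_subset.2 fun o _ => hST o, ?_, ?_⟩
  · rw [mul_comm]
    exact Finset.card_biUnion_le_card_mul O S 2 fun o _ => hcard o
  · intro p hp
    obtain ⟨t, htT, ht⟩ := hT p hp
    obtain ⟨o, hoO, ho⟩ := hO p hp
    obtain ⟨s, hs, hst⟩ := hS o t htT
    exact ⟨s, Finset.mem_biUnion.2 ⟨o, hoO, hs⟩, Set.uIcc_subset_Icc ht ho hst⟩

/-- The key combinatorial step in the analysis of the offline 2-approximation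
algorithm LBL for MLAP-D: if a finite set `T` of times and a finite set `O` of times
both hit every interval `[a, d]` of the finite family `𝒥`, then `T` has a subset `T'`
of cardinality at most `2·|O|` that still hits every interval of `𝒥`. -/
theorem stmt14 (𝒥 : Finset (ℝ × ℝ)) (h𝒥 : ∀ p ∈ 𝒥, p.1 ≤ p.2)
    (T O : Finset ℝ)
    (hT : ∀ p ∈ 𝒥, ∃ s ∈ T, p.1 ≤ s ∧ s ≤ p.2)
    (hO : ∀ p ∈ 𝒥, ∃ s ∈ O, p.1 ≤ s ∧ s ≤ p.2) :
    ∃ T' ⊆ T, T'.card ≤ 2 * O.card ∧ ∀ p ∈ 𝒥, ∃ s ∈ T', p.1 ≤ s ∧ s ≤ p.2 :=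
  stmt14_general 𝒥 T O hT hO
end

section
/- Let (V, r, par) be a finite rooted tree and ℓ : V → ℝ with ℓ r = 0 and ℓ v ≥ 0 for all v. For each v ∈ V let 𝒥_v be a finite set of pairs (a, d) ∈ ℝ × ℝ with a ≤ d (closed intervals) such that 𝒥_v ⊆ 𝒥_{par v} for every v ≠ r. Say a finite set T ⊆ ℝ hits 𝒥_v if T ∩ [a, d] ≠ ∅ for every (a, d) ∈ 𝒥_v. Let O assign to each v ∈ V a finite set O_v ⊆ ℝ such that O_v ⊆ O_{par v} for every v ≠ r and O_v hits 𝒥_v for every v. Let S assign to each v ∈ V a finite set S_v ⊆ ℝ such that S_r hits 𝒥_r, and for every v ≠ r: S_v ⊆ S_{par v}, S_v hits 𝒥_v, and S_v has minimum cardinality among all subsets of S_{par v} that hit 𝒥_v. Then ∑_{v∈V} ℓ v · |S_v| ≤ 2 · ∑_{v∈V} ℓ v · |O_v|. -/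
/-!
Each node is charged separately: for a non-root `v`, the parent's schedule `S (par v)` and the
optimal `O v` both hit `𝒥 v`. Keeping, for every `o ∈ O v`, only the two points of `S (par v)`
nearest to `o` on either side still hits `𝒥 v`, since an interval containing `o` and some point of
`S (par v)` contains one of these two neighbours. Hence the minimum `|S v|` is at most `2 |O v|`,
and the root costs nothing.
-/

/-- A finite set `T` of times hits the family `J` of closed intervals `[a, d]`
(given as pairs) if it intersects each of them. -/
def Hits (T : Finset ℝ) (J : Finset (ℝ × ℝ)) : Prop :=
  ∀ p ∈ J, ∃ s ∈ T, p.1 ≤ s ∧ s ≤ p.2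

open Finset

lemma Hits.mono {T : Finset ℝ} {J J' : Finset (ℝ × ℝ)} (h : Hits T J) (hJ : J' ⊆ J) :
    Hits T J' :=
  fun p hp => h p (hJ hp)

section Neighbours

variable {α : Type*} [LinearOrder α] {B : Finset α} {a b : α}

def greatestBelow (B : Finset α) (a : α) : Finset α :=
  {x ∈ B | x ≤ a ∧ ∀ y ∈ B, y ≤ a → y ≤ x}

def leastAbove (B : Finset α) (a : α) : Finset α :=
  {x ∈ B | a ≤ x ∧ ∀ y ∈ B, a ≤ y → x ≤ y}

lemma card_greatestBelow_le_one : (greatestBelow B a).card ≤ 1 := by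
  refine card_le_one.mpr fun x hx y hy => ?_
  simp only [greatestBelow, mem_filter] at hx hy
  exact le_antisymm (hy.2.2 x hx.1 hx.2.1) (hx.2.2 y hy.1 hy.2.1)

lemma card_leastAbove_le_one : (leastAbove B a).card ≤ 1 := by
  refine card_le_one.mpr fun x hx y hy => ?_
  simp only [leastAbove, mem_filter] at hx hy
  exact le_antisymm (hx.2.2 y hy.1 hy.2.1) (hy.2.2 x hx.1 hx.2.1)

lemma exists_mem_greatestBelow (hb : b ∈ B) (hba : b ≤ a) :
    ∃ x ∈ greatestBelow B a, b ≤ x := by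
  obtain ⟨x, hx, hmax⟩ := (B.filter (· ≤ a)).exists_max_image id ⟨b, mem_filter.mpr ⟨hb, hba⟩⟩
  rw [mem_filter] at hx
  refine ⟨x, mem_filter.mpr ⟨hx.1, hx.2, fun y hy hya => hmax y (mem_filter.mpr ⟨hy, hya⟩)⟩,
    hmax b (mem_filter.mpr ⟨hb, hba⟩)⟩

lemma exists_mem_leastAbove (hb : b ∈ B) (hab : a ≤ b) :
    ∃ x ∈ leastAbove B a, x ≤ b := by
  obtain ⟨x, hx, hmin⟩ := (B.filter (a ≤ ·)).exists_min_image id ⟨b, mem_filter.mpr ⟨hb, hab⟩⟩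
  rw [mem_filter] at hx
  refine ⟨x, mem_filter.mpr ⟨hx.1, hx.2, fun y hy hay => hmin y (mem_filter.mpr ⟨hy, hay⟩)⟩,
    hmin b (mem_filter.mpr ⟨hb, hab⟩)⟩

def neighbours (B : Finset α) (a : α) : Finset α :=
  greatestBelow B a ∪ leastAbove B a

lemma neighbours_subset : neighbours B a ⊆ B :=
  union_subset (filter_subset _ _) (filter_subset _ _)

lemma card_neighbours_le_two : (neighbours B a).card ≤ 2 :=
  (card_union_le _ _).trans (add_le_add card_greatestBelow_le_one card_leastAbove_le_one)

end Neighbours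

lemma Hits.biUnion_neighbours {A B : Finset ℝ} {J : Finset (ℝ × ℝ)} (hB : Hits B J)
    (hA : Hits A J) : Hits (A.biUnion (neighbours B)) J := by
  intro p hp
  obtain ⟨a, ha, hpa, hap⟩ := hA p hp
  obtain ⟨b, hb, hpb, hbp⟩ := hB p hp
  rcases le_total b a with hba | hab
  · obtain ⟨x, hx, hbx⟩ := exists_mem_greatestBelow hb hba
    have hxa : x ≤ a := (mem_filter.mp hx).2.1
    exact ⟨x, mem_biUnion.mpr ⟨a, ha, mem_union_left _ hx⟩, hpb.trans hbx, hxa.trans hap⟩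
  · obtain ⟨x, hx, hxb⟩ := exists_mem_leastAbove hb hab
    have hax : a ≤ x := (mem_filter.mp hx).2.1
    exact ⟨x, mem_biUnion.mpr ⟨a, ha, mem_union_right _ hx⟩, hpa.trans hax, hxb.trans hbp⟩

lemma card_le_two_mul_of_minimal_hitting_subset {A B S : Finset ℝ} {J : Finset (ℝ × ℝ)}
    (hB : Hits B J) (hA : Hits A J) (hS : ∀ T ⊆ B, Hits T J → S.card ≤ T.card) :
    S.card ≤ 2 * A.card := by
  have hT := hS (A.biUnion (neighbours B)) (biUnion_subset.mpr fun _ _ => neighbours_subset)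
    (hB.biUnion_neighbours hA)
  calc S.card ≤ (A.biUnion (neighbours B)).card := hT
    _ ≤ ∑ a ∈ A, (neighbours B a).card := card_biUnion_le
    _ ≤ ∑ _a ∈ A, 2 := sum_le_sum fun _ _ => card_neighbours_le_two
    _ = 2 * A.card := by rw [sum_const, smul_eq_mul, mul_comm]

theorem stmt15_general {V : Type*} [Fintype V]
    (r : V) (par : V → V)
    (ℓ : V → ℝ) (hℓr : ℓ r = 0) (hℓ : ∀ v, 0 ≤ ℓ v)
    (𝒥 : V → Finset (ℝ × ℝ))
    (h𝒥nest : ∀ v, v ≠ r → 𝒥 v ⊆ 𝒥 (par v))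
    (O : V → Finset ℝ)
    (hOhits : ∀ v, Hits (O v) (𝒥 v))
    (S : V → Finset ℝ) (hSr : Hits (S r) (𝒥 r))
    (hShits : ∀ v, v ≠ r → Hits (S v) (𝒥 v))
    (hSmin : ∀ v, v ≠ r → ∀ T ⊆ S (par v), Hits T (𝒥 v) → (S v).card ≤ T.card) :
    ∑ v : V, ℓ v * ((S v).card : ℝ) ≤ 2 * ∑ v : V, ℓ v * ((O v).card : ℝ) := by
  have hS : ∀ w, Hits (S w) (𝒥 w) := by
    intro w
    rcases eq_or_ne w r with rfl | hw
    exacts [hSr, hShits w hw]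
  rw [mul_sum]
  refine sum_le_sum fun v _ => ?_
  by_cases hv : v = r
  · simp [hv, hℓr]
  have hcard : ((S v).card : ℝ) ≤ 2 * (O v).card := by
    exact_mod_cast card_le_two_mul_of_minimal_hitting_subset ((hS (par v)).mono (h𝒥nest v hv))
      (hOhits v) (hSmin v hv)
  calc ℓ v * ((S v).card : ℝ) ≤ ℓ v * (2 * (O v).card) := mul_le_mul_of_nonneg_left hcard (hℓ v)
    _ = 2 * (ℓ v * (O v).card) := by ring

/-- Algorithm LBL is a 2-approximation for offline MLAP-D. `(V, r, par)` is a finite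
rooted tree; `𝒥 v` is the set of `[arrival, deadline]` intervals of the requests in the
subtree of `v` (nested along edges); `O` encodes a feasible (e.g. optimal) schedule and
`S` the schedule produced by the level-by-level earliest-deadline algorithm LBL, which
for each non-root `v` picks a minimum-cardinality subset of the parent's service times
hitting `𝒥 v`. Then the cost of `S` is at most twice the cost of `O`. -/
theorem stmt15 {V : Type*} [Fintype V] [DecidableEq V]
    (r : V) (par : V → V) (hroot : par r = r) (hreach : ∀ v, ∃ n : ℕ, par^[n] v = r)
    (ℓ : V → ℝ) (hℓr : ℓ r = 0) (hℓ : ∀ v, 0 ≤ ℓ v)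
    (𝒥 : V → Finset (ℝ × ℝ)) (h𝒥int : ∀ v, ∀ p ∈ 𝒥 v, p.1 ≤ p.2)
    (h𝒥nest : ∀ v, v ≠ r → 𝒥 v ⊆ 𝒥 (par v))
    (O : V → Finset ℝ) (hOnest : ∀ v, v ≠ r → O v ⊆ O (par v))
    (hOhits : ∀ v, Hits (O v) (𝒥 v))
    (S : V → Finset ℝ) (hSr : Hits (S r) (𝒥 r))
    (hSnest : ∀ v, v ≠ r → S v ⊆ S (par v))
    (hShits : ∀ v, v ≠ r → Hits (S v) (𝒥 v))
    (hSmin : ∀ v, v ≠ r → ∀ T ⊆ S (par v), Hits T (𝒥 v) → (S v).card ≤ T.card) :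
    ∑ v : V, ℓ v * ((S v).card : ℝ) ≤ 2 * ∑ v : V, ℓ v * ((O v).card : ℝ) :=
  stmt15_general r par ℓ hℓr hℓ 𝒥 h𝒥nest O hOhits S hSr hShits hSmin
end
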